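/- arXiv:2508.03512 — 6 statements merged into one kernel-verified Lean document; each statement's English description precedes it below -/
import Mathlib

section
/- For every pair of unit vectors m₁, m₂ ∈ ℝ² that are not parallel (m₁ ≠ m₂ and m₁ ≠ −m₂), there exists a constant C > 0 depending only on m₁ and m₂ such that for every integer N ≥ 2 with ε = 1/N, every (i', j') ∈ F_N, and every v ∈ ℝ²: (sin²(π i' ε)/ε²)·(m₁·v)² + (sin²(π j' ε)/ε²)·(m₂·v)² + ( ((sin(π i' ε)/ε)·m₁⊥ − (sin(π j' ε)/ε)·m₂⊥)·v )² ≥ C·((i')² + (j')²)·|v|². -/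
noncomputable section
open Real Matrix Finset

/-- counterclockwise rotation by π/2 -/
def perp (l : Fin 2 → ℝ) : Fin 2 → ℝ := ![-(l 1), l 0]

/-- ε = 1/N -/
def eps (N : ℕ) : ℝ := 1 / N

/-- (i, j) belongs to the frequency set F_N, i.e. −N/2 ≤ i < N/2 and −N/2 ≤ j < N/2 -/
def inFreq (N : ℕ) (i j : ℤ) : Prop :=
  -(N:ℤ) ≤ 2*i ∧ 2*i < (N:ℤ) ∧ -(N:ℤ) ≤ 2*j ∧ 2*j < (N:ℤ)

/- ### Auxiliary lemmas -/

lemma det_bound' (c d s t : ℝ) (hc : c^2 ≤ 1) (hd : d^2 ≤ 1) :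
    d^2/25 * (s^2+t^2)^2 ≤ d^2*t^4 + (s^2+t^2)*(s-t*c)^2 := by
  rcases le_or_gt (s^2) (4*t^2) with hcase | hcase
  · nlinarith [mul_nonneg (add_nonneg (sq_nonneg s) (sq_nonneg t)) (sq_nonneg (s - t*c)),
      mul_nonneg (sq_nonneg d) (mul_nonneg (by linarith : (0:ℝ) ≤ 4*t^2 - s^2)
        (by positivity : (0:ℝ) ≤ 6*t^2 + s^2))]
  · have h3 : (s^2+t^2)/5 ≤ (s - t*c)^2 := by
      nlinarith [sq_nonneg (s - 2*t*c), mul_nonneg (sq_nonneg t) (sub_nonneg.2 hc)]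
    have h4 := mul_le_mul_of_nonneg_left h3 (by positivity : (0:ℝ) ≤ s^2+t^2)
    nlinarith [mul_nonneg (sq_nonneg d) (sq_nonneg (t^2)),
      mul_nonneg (sub_nonneg.2 hd) (sq_nonneg (s^2+t^2))]

lemma trace_ineq' (A B C a b : ℝ) :
    (A*C - B^2)*(a^2+b^2) ≤ (A+C)*(A*a^2+2*B*a*b+C*b^2) := by
  nlinarith [sq_nonneg (A*a + B*b), sq_nonneg (B*a + C*b)]

lemma chain_ineq' (A B C Q X k : ℝ) (h1 : k ≤ A*C - B^2) (h2 : (A*C-B^2)*X ≤ (A+C)*Q)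
    (h3 : A + C ≤ 3*A) (hQ : 0 ≤ Q) (hX : 0 ≤ X) : k*X ≤ 3*A*Q :=
  calc k*X ≤ (A*C-B^2)*X := mul_le_mul_of_nonneg_right h1 hX
    _ ≤ (A+C)*Q := h2
    _ ≤ 3*A*Q := mul_le_mul_of_nonneg_right h3 hQ

lemma final_step' (A Q X k : ℝ) (hA : 0 < A) (hk : 0 ≤ k) (hX : 0 ≤ X)
    (h : k/25 * A^2 * X ≤ 3*A*Q) : k/100*(A*X) ≤ Q := by
  nlinarith [mul_nonneg (mul_nonneg hk (sq_nonneg A)) hX]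

/-- The core algebraic inequality: for `c² + d² = 1`,
`s²a² + t²(ca+db)² + (sb + tda − tcb)² ≥ (d²/100)(s²+t²)(a²+b²)`. -/
lemma key_alg (c d s t a b : ℝ) (h : c^2 + d^2 = 1) :
    d^2/100 * ((s^2+t^2) * (a^2+b^2)) ≤
      s^2*a^2 + t^2*(c*a+d*b)^2 + (s*b + t*d*a - t*c*b)^2 := by
  have hd : d^2 ≤ 1 := by nlinarith [sq_nonneg c]
  have hc : c^2 ≤ 1 := by nlinarith [sq_nonneg d]
  have hQ : s^2*a^2 + t^2*(c*a+d*b)^2 + (s*b + t*d*a - t*c*b)^2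
      = (s^2+t^2)*a^2 + 2*(t*d*s)*a*b + (t^2*d^2+(s-t*c)^2)*b^2 := by
    linear_combination (t^2*a^2) * h
  have hQ0 : (0:ℝ) ≤ s^2*a^2 + t^2*(c*a+d*b)^2 + (s*b + t*d*a - t*c*b)^2 := by positivity
  have hX : (0:ℝ) ≤ a^2 + b^2 := by positivity
  rcases (by positivity : (0:ℝ) ≤ s^2+t^2).eq_or_lt with hA | hA
  · have hs : s = 0 := by nlinarith [sq_nonneg s, sq_nonneg t]
    have ht : t = 0 := by nlinarith [sq_nonneg s, sq_nonneg t]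
    subst hs; subst ht
    simpa using hQ0
  · have hDet : d^2/25 * (s^2+t^2)^2 ≤ (s^2+t^2)*(t^2*d^2+(s-t*c)^2) - (t*d*s)^2 := by
      have := det_bound' c d s t hc hd
      nlinarith [this]
    have hT : (s^2+t^2) + (t^2*d^2+(s-t*c)^2) ≤ 3*(s^2+t^2) := by
      nlinarith [sq_nonneg (s + t*c), mul_nonneg (sq_nonneg t) (sub_nonneg.2 hc)]
    have hchain := chain_ineq' (s^2+t^2) (t*d*s) (t^2*d^2+(s-t*c)^2)
      ((s^2+t^2)*a^2 + 2*(t*d*s)*a*b + (t^2*d^2+(s-t*c)^2)*b^2) (a^2+b^2)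
      (d^2/25 * (s^2+t^2)^2) hDet (trace_ineq' _ _ _ _ _) hT (by rw [← hQ]; exact hQ0) hX
    have := final_step' (s^2+t^2)
      ((s^2+t^2)*a^2 + 2*(t*d*s)*a*b + (t^2*d^2+(s-t*c)^2)*b^2) (a^2+b^2) (d^2)
      hA (sq_nonneg d) hX (by linarith)
    rw [hQ]; linarith

/-- Jordan's inequality, squared form. -/
lemma jordan_sq (x : ℝ) (h : |x| ≤ π / 2) : (2/π)^2 * x^2 ≤ Real.sin x ^ 2 := by
  have hπ : 0 < π := Real.pi_pos
  rcases le_total 0 x with hx | hx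
  · have h1 : 2/π * x ≤ Real.sin x := Real.mul_le_sin hx (by rwa [abs_of_nonneg hx] at h)
    have h2 : 0 ≤ 2/π * x := by positivity
    nlinarith
  · have hx' : 0 ≤ -x := by linarith
    have h1 : 2/π * (-x) ≤ Real.sin (-x) := Real.mul_le_sin hx' (by rwa [abs_of_nonpos hx] at h)
    rw [Real.sin_neg] at h1
    have h2 : 0 ≤ 2/π * (-x) := by positivity
    nlinarith

/-- For frequencies in `F_N`, `sin²(πiε)/ε² ≥ 4i²`. -/
lemma sin_bound (N : ℕ) (hN : 2 ≤ N) (i : ℤ) (h1 : -(N:ℤ) ≤ 2*i) (h2 : 2*i < N) :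
    4 * (i:ℝ)^2 ≤ Real.sin (π * i * eps N)^2 / (eps N)^2 := by
  have hπ : 0 < π := Real.pi_pos
  have hN0 : (0:ℝ) < N := by positivity
  have hi1 : -(N:ℝ) ≤ 2*(i:ℝ) := by exact_mod_cast h1
  have hi2 : 2*(i:ℝ) ≤ (N:ℝ) := by exact_mod_cast h2.le
  have heps : eps N = 1/N := rfl
  have harg : π * i * eps N = (π * i) / N := by rw [heps]; ring
  have habs : |π * i * eps N| ≤ π / 2 := by
    rw [abs_le, harg]
    constructor
    · rw [le_div_iff₀ hN0]
      nlinarith [mul_nonneg hπ.le (by linarith : (0:ℝ) ≤ 2*(i:ℝ) + N)]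
    · rw [div_le_iff₀ hN0]
      nlinarith [mul_nonneg hπ.le (by linarith : (0:ℝ) ≤ (N:ℝ) - 2*(i:ℝ))]
  have hj := jordan_sq (π * i * eps N) habs
  have h3 : (2/π)^2 * (π * i * eps N)^2 = 4*(i:ℝ)^2 * (eps N)^2 := by
    rw [heps]; field_simp; ring
  rw [h3] at hj
  rw [le_div_iff₀ (by rw [heps]; positivity : (0:ℝ) < (eps N)^2)]
  exact hj

/-- Lemma `coercive 1`: for unit, non-parallel vectors m₁, m₂ in ℝ²,
there is C > 0 depending only on m₁, m₂ such that for every N ≥ 2 (ε = 1/N),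
every (i', j') ∈ F_N and every v ∈ ℝ², the stated quadratic form is bounded
below by C((i')² + (j')²)|v|². -/
theorem coercive_one (m₁ m₂ : Fin 2 → ℝ)
    (hm₁ : m₁ ⬝ᵥ m₁ = 1) (hm₂ : m₂ ⬝ᵥ m₂ = 1)
    (hpar : m₁ ≠ m₂ ∧ m₁ ≠ -m₂) :
    ∃ C > 0, ∀ N : ℕ, 2 ≤ N → ∀ i j : ℤ, inFreq N i j → ∀ v : Fin 2 → ℝ,
      C * ((i:ℝ)^2 + (j:ℝ)^2) * (v ⬝ᵥ v) ≤
        (Real.sin (π * i * eps N)^2 / (eps N)^2) * (m₁ ⬝ᵥ v)^2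
        + (Real.sin (π * j * eps N)^2 / (eps N)^2) * (m₂ ⬝ᵥ v)^2
        + (((Real.sin (π * i * eps N) / eps N) • perp m₁
            - (Real.sin (π * j * eps N) / eps N) • perp m₂) ⬝ᵥ v)^2 := by
  obtain ⟨h12, h12'⟩ := hpar
  have hm1 : (m₁ 0)^2 + (m₁ 1)^2 = 1 := by
    simpa [dotProduct, Fin.sum_univ_two, sq] using hm₁
  have hm2 : (m₂ 0)^2 + (m₂ 1)^2 = 1 := by
    simpa [dotProduct, Fin.sum_univ_two, sq] using hm₂
  set p := m₁ 0 with hp; set q := m₁ 1 with hq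
  set r := m₂ 0 with hr; set w := m₂ 1 with hw
  have hd0 : p*w - q*r ≠ 0 := by
    intro h0
    have hc2 : (p*r+q*w - 1)*(p*r+q*w + 1) = 0 := by
      linear_combination (r^2+w^2) * hm1 + hm2 - (p*w - q*r) * h0
    rcases mul_eq_zero.1 hc2 with hc | hc
    · apply h12
      have h5 : (p-r)^2 + (q-w)^2 ≤ 0 := by nlinarith [hm1, hm2]
      have h6 : p = r := by nlinarith [sq_nonneg (p-r), sq_nonneg (q-w)]
      have h7 : q = w := by nlinarith [sq_nonneg (p-r), sq_nonneg (q-w)]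
      funext k; fin_cases k
      · exact h6
      · exact h7
    · apply h12'
      have h5 : (p+r)^2 + (q+w)^2 ≤ 0 := by nlinarith [hm1, hm2]
      have h6 : p = -r := by nlinarith [sq_nonneg (p+r), sq_nonneg (q+w)]
      have h7 : q = -w := by nlinarith [sq_nonneg (p+r), sq_nonneg (q+w)]
      funext k; fin_cases k
      · exact h6
      · exact h7
  refine ⟨(p*w - q*r)^2/25, by positivity, ?_⟩
  intro N hN i j hfreq v
  obtain ⟨hf1, hf2, hf3, hf4⟩ := hfreq
  have hsi := sin_bound N hN i hf1 hf2
  have hsj := sin_bound N hN j hf3 hf4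
  set s := Real.sin (π * i * eps N) / eps N with hs
  set t := Real.sin (π * j * eps N) / eps N with ht
  have hs2 : Real.sin (π * i * eps N)^2 / (eps N)^2 = s^2 := (div_pow _ _ 2).symm
  have ht2 : Real.sin (π * j * eps N)^2 / (eps N)^2 = t^2 := (div_pow _ _ 2).symm
  rw [hs2] at hsi; rw [ht2] at hsj
  rw [hs2, ht2]
  set c := p*r + q*w with hc
  set d := p*w - q*r with hd
  set a := p * v 0 + q * v 1 with ha
  set b := -q * v 0 + p * v 1 with hb
  have hcd : c^2 + d^2 = 1 := by
    rw [hc, hd]; linear_combination (r^2+w^2) * hm1 + hm2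
  have key := key_alg c d s t a b hcd
  have e1 : a^2 + b^2 = v 0^2 + v 1^2 := by
    rw [ha, hb]; linear_combination (v 0^2 + v 1^2) * hm1
  have e2 : r * v 0 + w * v 1 = c*a + d*b := by
    rw [hc, hd, ha, hb]; linear_combination (-(r * v 0 + w * v 1)) * hm1
  have e3 : -w * v 0 + r * v 1 = c*b - d*a := by
    rw [hc, hd, ha, hb]; linear_combination (w * v 0 - r * v 1) * hm1
  have edot1 : m₁ ⬝ᵥ v = a := by
    simp [dotProduct, Fin.sum_univ_two, ha, hp, hq]
  have edot2 : m₂ ⬝ᵥ v = c*a + d*b := by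
    rw [← e2]; simp [dotProduct, Fin.sum_univ_two, hr, hw]
  have edot3 : ((s • perp m₁ - t • perp m₂) ⬝ᵥ v) = s*b + t*d*a - t*c*b := by
    have : ((s • perp m₁ - t • perp m₂) ⬝ᵥ v)
        = s * (-q * v 0 + p * v 1) - t * (-w * v 0 + r * v 1) := by
      simp [dotProduct, Fin.sum_univ_two, perp, hp, hq, hr, hw]
      ring
    rw [this, e3, ← hb]; ring
  rw [edot1, edot2, edot3]
  have hX : (0:ℝ) ≤ v 0^2 + v 1^2 := by positivity
  have hvv : v ⬝ᵥ v = v 0^2 + v 1^2 := by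
    simp [dotProduct, Fin.sum_univ_two, sq]
  rw [hvv]
  have h4 : 4*((i:ℝ)^2 + (j:ℝ)^2) ≤ s^2 + t^2 := by linarith
  have h5 := mul_le_mul_of_nonneg_left (mul_le_mul_of_nonneg_right h4 hX)
    (by positivity : (0:ℝ) ≤ d^2/100)
  calc d^2/25 * ((i:ℝ)^2 + (j:ℝ)^2) * (v 0^2 + v 1^2)
      = d^2/100 * (4*((i:ℝ)^2 + (j:ℝ)^2) * (v 0^2 + v 1^2)) := by ring
    _ ≤ d^2/100 * ((s^2+t^2) * (v 0^2 + v 1^2)) := h5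
    _ = d^2/100 * ((s^2+t^2) * (a^2+b^2)) := by rw [e1]
    _ ≤ _ := key
end
end

section
/- For every pair of unit vectors m₁, m₂ ∈ ℝ² that are not parallel (m₁ ≠ m₂ and m₁ ≠ −m₂), there exists a constant C > 0 depending only on m₁ and m₂ such that for every integer N ≥ 2 with ε = 1/N, every (i', j') ∈ F_N, and every v ∈ ℝ²: (sin²(π i' ε)/ε²)·(m₁·v)² + (sin²(π j' ε)/ε²)·(m₂·v)² + (sin²(π i' ε) + sin²(π j' ε))·( (sin²(π i' ε)/ε²)·(m₁⊥·v)² + (sin²(π j' ε)/ε²)·(m₂⊥·v)² ) + ( (cos(π j' ε)·(sin(π i' ε)/ε)·m₁⊥ − cos(π i' ε)·(sin(π j' ε)/ε)·m₂⊥)·v )² ≥ C·((i')² + (j')²)·|v|². -/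
noncomputable section
open Real Matrix Finset

lemma key1 (γ δ s1 c1 s2 c2 p q a a' : ℝ)
    (hγδ : γ^2 + δ^2 = 1) (h1 : s1^2 + c1^2 = 1) (h2 : s2^2 + c2^2 = 1)
    (hpq : q^2 ≤ p^2) :
    δ^2/256 * (p^2+q^2) * (a^2+a'^2) ≤
      p^2*a^2 + q^2*(γ*a+δ*a')^2
      + (s1^2+s2^2)*(p^2*a'^2 + q^2*(-(δ*a)+γ*a')^2)
      + (c2*p*a' - c1*q*(-(δ*a)+γ*a'))^2 := by
  have hδ1 : δ^2 ≤ 1 := by linarith [sq_nonneg γ]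
  have hc1le : c1^2 ≤ 1 := by linarith [sq_nonneg s1]
  have hγ1 : γ^2 ≤ 1 := by linarith [sq_nonneg δ]
  have hT : (0:ℝ) ≤ (c2*p*a' - c1*q*(-(δ*a)+γ*a'))^2 := sq_nonneg _
  have hσ : (0:ℝ) ≤ (s1^2+s2^2)*(p^2*a'^2 + q^2*(-(δ*a)+γ*a')^2) := by positivity
  have hqb : (0:ℝ) ≤ q^2*(γ*a+δ*a')^2 := by positivity
  have hpa : (0:ℝ) ≤ p^2*a^2 := by positivity
  rcases le_or_gt (a^2+a'^2) 0 with hV | hV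
  · have hV0 : a^2+a'^2 = 0 := le_antisymm hV (by positivity)
    rw [hV0, mul_zero]
    linarith
  have prod2 : (0:ℝ) ≤ δ^2 * (p^2 - q^2) * (a^2+a'^2) :=
    mul_nonneg (mul_nonneg (sq_nonneg δ) (by linarith)) hV.le
  rcases le_or_gt (δ^2/8 * (a^2+a'^2)) (a^2) with hc | hc
  · -- p^2*a^2 dominates
    have prod1 : (0:ℝ) ≤ p^2 * (a^2 - δ^2/8*(a^2+a'^2)) :=
      mul_nonneg (sq_nonneg p) (by linarith)
    linarith [prod1, prod2]
  have ha7 : (7/8)*(a^2+a'^2) ≤ a'^2 := by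
    linarith [mul_nonneg (by linarith : (0:ℝ) ≤ 1 - δ^2) hV.le]
  have prod3 : (0:ℝ) ≤ p^2 * (a'^2 - 7/8*(a^2+a'^2)) :=
    mul_nonneg (sq_nonneg p) (by linarith)
  have prod4 : (0:ℝ) ≤ (1 - δ^2) * (p^2 * (a^2+a'^2)) :=
    mul_nonneg (by linarith) (mul_nonneg (sq_nonneg p) hV.le)
  rcases le_or_gt (1/2 : ℝ) (s2^2) with hs2 | hs2
  · -- sigma term dominates
    linarith [mul_nonneg (sq_nonneg s1) (mul_nonneg (sq_nonneg p) (sq_nonneg a')),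
      mul_nonneg (by linarith : (0:ℝ) ≤ s2^2 - 1/2) (mul_nonneg (sq_nonneg p) (sq_nonneg a')),
      mul_nonneg (add_nonneg (sq_nonneg s1) (sq_nonneg s2)) (mul_nonneg (sq_nonneg q) (sq_nonneg (-(δ*a)+γ*a')))]
  have hc2 : (1/2:ℝ) ≤ c2^2 := by linarith
  rcases le_or_gt (c1^2*q^2*(-(δ*a)+γ*a')^2) (c2^2*p^2*a'^2/4) with hsub | hsub
  · -- cross term dominates
    have hT4 : c2^2*p^2*a'^2/4 ≤ (c2*p*a' - c1*q*(-(δ*a)+γ*a'))^2 := by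
      linarith [sq_nonneg (c2*p*a' - 2*(c1*q*(-(δ*a)+γ*a'))), hsub]
    linarith [mul_nonneg (by linarith : (0:ℝ) ≤ c2^2 - 1/2) (mul_nonneg (sq_nonneg p) (sq_nonneg a'))]
  · -- q^2 b^2 dominates
    have hBV : (γ*a+δ*a')^2 + (-(δ*a)+γ*a')^2 = a^2+a'^2 := by
      linear_combination (a^2+a'^2)*hγδ
    have hb'V : (-(δ*a)+γ*a')^2 ≤ a^2 + a'^2 := by
      linarith [sq_nonneg (γ*a+δ*a')]
    have h8 : p^2*a'^2/8 ≤ q^2*(-(δ*a)+γ*a')^2 := by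
      linarith [mul_nonneg (by linarith : (0:ℝ) ≤ 1 - c1^2) (mul_nonneg (sq_nonneg q) (sq_nonneg (-(δ*a)+γ*a'))),
        mul_nonneg (by linarith : (0:ℝ) ≤ c2^2 - 1/2) (mul_nonneg (sq_nonneg p) (sq_nonneg a'))]
    have hqp : 7/64 * p^2 ≤ q^2 := by
      by_contra hcon
      push_neg at hcon
      have hppos : (0:ℝ) < 7/64*p^2 - q^2 := by linarith
      have := mul_pos hppos hV
      linarith [mul_nonneg (sq_nonneg q) (by linarith : (0:ℝ) ≤ a^2+a'^2 - (-(δ*a)+γ*a')^2),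
        prod3, h8]
    have hb2 : 5*δ^2/16 * (a^2+a'^2) ≤ (γ*a+δ*a')^2 := by
      linarith [sq_nonneg (2*(γ*a)+δ*a'),
        mul_nonneg (sq_nonneg δ) (by linarith : (0:ℝ) ≤ a'^2 - (1-δ^2/8)*(a^2+a'^2)),
        mul_nonneg (by linarith : (0:ℝ) ≤ 1 - γ^2) (sq_nonneg a),
        mul_nonneg (mul_nonneg (sq_nonneg δ) (by linarith : (0:ℝ) ≤ 1 - δ^2)) hV.le]
    have hprod : (7/64 * p^2) * (5*δ^2/16 * (a^2+a'^2)) ≤ q^2 * (γ*a+δ*a')^2 :=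
      mul_le_mul hqp hb2 (by positivity) (sq_nonneg q)
    linarith [hprod, prod2]

lemma key2 (γ δ s1 c1 s2 c2 p q a a' : ℝ)
    (hγδ : γ^2 + δ^2 = 1) (h1 : s1^2 + c1^2 = 1) (h2 : s2^2 + c2^2 = 1) :
    δ^2/256 * (p^2+q^2) * (a^2+a'^2) ≤
      p^2*a^2 + q^2*(γ*a+δ*a')^2
      + (s1^2+s2^2)*(p^2*a'^2 + q^2*(-(δ*a)+γ*a')^2)
      + (c2*p*a' - c1*q*(-(δ*a)+γ*a'))^2 := by
  rcases le_total (q^2) (p^2) with h | h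
  · exact key1 γ δ s1 c1 s2 c2 p q a a' hγδ h1 h2 h
  · have key := key1 γ (-δ) s2 c2 s1 c1 q p (γ*a+δ*a') (-(δ*a)+γ*a')
      (by linear_combination hγδ) h2 h1 h
    have e1 : γ*(γ*a+δ*a') + (-δ)*(-(δ*a)+γ*a') = a := by linear_combination a*hγδ
    have e2 : -((-δ)*(γ*a+δ*a')) + γ*(-(δ*a)+γ*a') = a' := by linear_combination a'*hγδ
    have e3 : (γ*a+δ*a')^2 + (-(δ*a)+γ*a')^2 = a^2+a'^2 := by
      linear_combination (a^2+a'^2)*hγδ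
    rw [e1, e2, e3] at key
    have e4 : (-δ)^2 = δ^2 := by ring
    rw [e4] at key
    linarith [key, sq_nonneg (c2*p*a' - c1*q*(-(δ*a)+γ*a')), sq_nonneg (c1*q*(-(δ*a)+γ*a') - c2*p*a')]

lemma sin_sq_ge {x : ℝ} (h : |x| ≤ π/2) : (2/π)^2 * x^2 ≤ Real.sin x ^ 2 := by
  have hπ := Real.pi_pos
  rcases le_total 0 x with hx | hx
  · have h1 : x ≤ π/2 := (abs_le.mp h).2
    have hs := Real.mul_le_sin hx h1
    have h2 : 0 ≤ 2/π * x := by positivity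
    nlinarith
  · have h1 : -x ≤ π/2 := by rw [abs_le] at h; linarith
    have hx' : 0 ≤ -x := by linarith
    have hs := Real.mul_le_sin hx' h1
    have h2 : 0 ≤ 2/π * (-x) := by positivity
    have hsn : Real.sin (-x) = -Real.sin x := Real.sin_neg x
    nlinarith [hs, hsn]

lemma freq_bound (N : ℕ) (hN : 2 ≤ N) (k : ℤ) (h1 : -(N:ℤ) ≤ 2*k) (h2 : 2*k < N) :
    4*(k:ℝ)^2 ≤ Real.sin (π * k * eps N)^2 / (eps N)^2 := by
  have hπ := Real.pi_pos
  have hNp : (0:ℝ) < N := by exact_mod_cast (by omega : 0 < N)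
  have hk1 : -(N:ℝ) ≤ 2*k := by exact_mod_cast h1
  have hk2 : (2*k:ℝ) ≤ N := by exact_mod_cast h2.le
  have habs : |π * k * eps N| ≤ π/2 := by
    rw [eps, show π * (k:ℝ) * (1/N) = (π*k)/N by ring, abs_le]
    constructor
    · rw [le_div_iff₀ hNp]
      nlinarith
    · rw [div_le_iff₀ hNp]
      nlinarith
  have := sin_sq_ge habs
  have heq : (2/π)^2 * (π * k * eps N)^2 = 4*(k:ℝ)^2 * (eps N)^2 := by
    field_simp
    ring
  rw [heq] at this
  have heps : (0:ℝ) < (eps N)^2 := by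
    rw [eps]; positivity
  rw [le_div_iff₀ heps]
  exact this


/-- Lemma `quadratic form estimate`: for unit, non-parallel vectors
m₁, m₂ in ℝ², there is C > 0 depending only on m₁, m₂ such that for every N ≥ 2
(ε = 1/N), every (i', j') ∈ F_N and every v ∈ ℝ², the stated quadratic form is
bounded below by C((i')² + (j')²)|v|². -/
theorem quadratic_form_estimate (m₁ m₂ : Fin 2 → ℝ)
    (hm₁ : m₁ ⬝ᵥ m₁ = 1) (hm₂ : m₂ ⬝ᵥ m₂ = 1)
    (hpar : m₁ ≠ m₂ ∧ m₁ ≠ -m₂) :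
    ∃ C > 0, ∀ N : ℕ, 2 ≤ N → ∀ i j : ℤ, inFreq N i j → ∀ v : Fin 2 → ℝ,
      C * ((i:ℝ)^2 + (j:ℝ)^2) * (v ⬝ᵥ v) ≤
        (Real.sin (π * i * eps N)^2 / (eps N)^2) * (m₁ ⬝ᵥ v)^2
        + (Real.sin (π * j * eps N)^2 / (eps N)^2) * (m₂ ⬝ᵥ v)^2
        + (Real.sin (π * i * eps N)^2 + Real.sin (π * j * eps N)^2) *
            ((Real.sin (π * i * eps N)^2 / (eps N)^2) * (perp m₁ ⬝ᵥ v)^2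
              + (Real.sin (π * j * eps N)^2 / (eps N)^2) * (perp m₂ ⬝ᵥ v)^2)
        + (((Real.cos (π * j * eps N) * (Real.sin (π * i * eps N) / eps N)) • perp m₁
            - (Real.cos (π * i * eps N) * (Real.sin (π * j * eps N) / eps N)) • perp m₂)
            ⬝ᵥ v)^2 := by
  obtain ⟨hne, hne'⟩ := hpar
  have hm1 : m₁ 0 ^2 + m₁ 1 ^2 = 1 := by
    have h := hm₁
    simp only [dotProduct, Fin.sum_univ_two] at h
    linear_combination h
  have hm2 : m₂ 0 ^2 + m₂ 1 ^2 = 1 := by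
    have h := hm₂
    simp only [dotProduct, Fin.sum_univ_two] at h
    linear_combination h
  have hD : m₁ 0 * m₂ 1 - m₁ 1 * m₂ 0 ≠ 0 := by
    intro h0
    have hg2 : (m₁ 0 * m₂ 0 + m₁ 1 * m₂ 1)^2 = 1 := by
      linear_combination (m₂ 0^2 + m₂ 1^2)*hm1 + hm2
        - (m₁ 0 * m₂ 1 - m₁ 1 * m₂ 0)*h0
    have hu : m₂ 0 = (m₁ 0 * m₂ 0 + m₁ 1 * m₂ 1) * m₁ 0 := by
      linear_combination (-(m₁ 1))*h0 - m₂ 0 * hm1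
    have hw : m₂ 1 = (m₁ 0 * m₂ 0 + m₁ 1 * m₂ 1) * m₁ 1 := by
      linear_combination (m₁ 0)*h0 - m₂ 1 * hm1
    have hcases : (m₁ 0 * m₂ 0 + m₁ 1 * m₂ 1 - 1) * (m₁ 0 * m₂ 0 + m₁ 1 * m₂ 1 + 1) = 0 := by
      linear_combination hg2
    rcases mul_eq_zero.mp hcases with h | h
    · apply hne
      have hg1 : (m₁ 0 * m₂ 0 + m₁ 1 * m₂ 1) = 1 := by linarith
      funext idx
      fin_cases idx
      · show m₁ 0 = m₂ 0
        rw [hu, hg1, one_mul]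
      · show m₁ 1 = m₂ 1
        rw [hw, hg1, one_mul]
    · apply hne'
      have hg1 : (m₁ 0 * m₂ 0 + m₁ 1 * m₂ 1) = -1 := by linarith
      funext idx
      fin_cases idx
      · show m₁ 0 = -m₂ 0
        rw [hu, hg1]; ring
      · show m₁ 1 = -m₂ 1
        rw [hw, hg1]; ring
  have hDpos : 0 < (m₁ 0 * m₂ 1 - m₁ 1 * m₂ 0)^2 := by
    rcases hD.lt_or_gt with h | h <;> nlinarith
  refine ⟨(m₁ 0 * m₂ 1 - m₁ 1 * m₂ 0)^2/64, by positivity, ?_⟩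
  intro N hN i j hfr v
  obtain ⟨hi1, hi2, hj1, hj2⟩ := hfr
  have hγδ : (m₁ 0 * m₂ 0 + m₁ 1 * m₂ 1)^2 + (m₁ 0 * m₂ 1 - m₁ 1 * m₂ 0)^2 = 1 := by
    linear_combination (m₂ 0^2 + m₂ 1^2)*hm1 + hm2
  have hb : m₂ ⬝ᵥ v = (m₁ 0 * m₂ 0 + m₁ 1 * m₂ 1)*(m₁ ⬝ᵥ v)
      + (m₁ 0 * m₂ 1 - m₁ 1 * m₂ 0)*(perp m₁ ⬝ᵥ v) := by
    simp only [dotProduct, Fin.sum_univ_two, perp, Matrix.cons_val_zero,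
      Matrix.cons_val_one, Matrix.head_cons]
    linear_combination (-(m₂ 0 * v 0) - m₂ 1 * v 1) * hm1
  have hb' : perp m₂ ⬝ᵥ v = -((m₁ 0 * m₂ 1 - m₁ 1 * m₂ 0)*(m₁ ⬝ᵥ v))
      + (m₁ 0 * m₂ 0 + m₁ 1 * m₂ 1)*(perp m₁ ⬝ᵥ v) := by
    simp only [dotProduct, Fin.sum_univ_two, perp, Matrix.cons_val_zero,
      Matrix.cons_val_one, Matrix.head_cons]
    linear_combination (m₂ 1 * v 0 - m₂ 0 * v 1) * hm1
  have hvv : (m₁ ⬝ᵥ v)^2 + (perp m₁ ⬝ᵥ v)^2 = v ⬝ᵥ v := by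
    simp only [dotProduct, Fin.sum_univ_two, perp, Matrix.cons_val_zero,
      Matrix.cons_val_one, Matrix.head_cons]
    linear_combination (v 0^2 + v 1^2) * hm1
  have hcross : ((Real.cos (π * j * eps N) * (Real.sin (π * i * eps N) / eps N)) • perp m₁
            - (Real.cos (π * i * eps N) * (Real.sin (π * j * eps N) / eps N)) • perp m₂)
            ⬝ᵥ v = (Real.cos (π * j * eps N) * (Real.sin (π * i * eps N) / eps N)) * (perp m₁ ⬝ᵥ v)
            - (Real.cos (π * i * eps N) * (Real.sin (π * j * eps N) / eps N)) * (perp m₂ ⬝ᵥ v) := by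
    simp [sub_dotProduct, smul_dotProduct, smul_eq_mul]
  rw [hcross, hb, hb', ← hvv, ← div_pow, ← div_pow]
  have key := key2 (m₁ 0 * m₂ 0 + m₁ 1 * m₂ 1) (m₁ 0 * m₂ 1 - m₁ 1 * m₂ 0)
    (Real.sin (π * i * eps N)) (Real.cos (π * i * eps N))
    (Real.sin (π * j * eps N)) (Real.cos (π * j * eps N))
    (Real.sin (π * i * eps N) / eps N) (Real.sin (π * j * eps N) / eps N)
    (m₁ ⬝ᵥ v) (perp m₁ ⬝ᵥ v) hγδ (Real.sin_sq_add_cos_sq _) (Real.sin_sq_add_cos_sq _)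
  refine le_trans ?_ key
  have h1 : 4*(i:ℝ)^2 ≤ (Real.sin (π * i * eps N) / eps N)^2 := by
    rw [div_pow]; exact freq_bound N hN i hi1 hi2
  have h2 : 4*(j:ℝ)^2 ≤ (Real.sin (π * j * eps N) / eps N)^2 := by
    rw [div_pow]; exact freq_bound N hN j hj1 hj2
  have hVn : (0:ℝ) ≤ (m₁ ⬝ᵥ v)^2 + (perp m₁ ⬝ᵥ v)^2 := by positivity
  linarith [mul_nonneg (mul_nonneg hDpos.le (by linarith : (0:ℝ) ≤ (Real.sin (π * i * eps N) / eps N)^2 - 4*(i:ℝ)^2)) hVn,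
    mul_nonneg (mul_nonneg hDpos.le (by linarith : (0:ℝ) ≤ (Real.sin (π * j * eps N) / eps N)^2 - 4*(j:ℝ)^2)) hVn]
end
end

section
/- For every ρ* > 0 there exists a constant C > 0 depending only on ρ* such that for every integer N ≥ 2 with ε = 1/N, every (i', j') ∈ F_N, and every v ∈ ℝ²: v·(B_D[i', j'] v) ≥ C·((i')² + (j')²)·|v|². In particular the smallest eigenvalue of the real symmetric matrix B_D[i', j'] is at least C·((i')² + (j')²). -/
noncomputable section
open Real Matrix Finset

/-- triangular-lattice direction l₁ = (1/2, −√3/2) -/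
def tl1 : Fin 2 → ℝ := ![1/2, -(Real.sqrt 3)/2]
/-- triangular-lattice direction l₂ = (1, 0) -/
def tl2 : Fin 2 → ℝ := ![1, 0]
/-- triangular-lattice direction l₃ = (1/2, √3/2) -/
def tl3 : Fin 2 → ℝ := ![1/2, Real.sqrt 3 / 2]

/-- the block ρ l lᵀ + 12 l⊥ l⊥ᵀ -/
def blk (ρ : ℝ) (l : Fin 2 → ℝ) : Matrix (Fin 2) (Fin 2) ℝ :=
  ρ • vecMulVec l l + (12:ℝ) • vecMulVec (perp l) (perp l)

/-- the discrete matrix A_D[i', j'] -/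
def AD (ρ : ℝ) (N : ℕ) (i j : ℤ) : Matrix (Fin 2) (Fin 2) ℝ :=
  (4 * Real.sin (π * i * eps N)^2 / (eps N)^2) • blk ρ tl1
  + (4 * Real.sin (π * (i+j) * eps N)^2 / (eps N)^2) • blk ρ tl2
  + (4 * Real.sin (π * j * eps N)^2 / (eps N)^2) • blk ρ tl3

/-- the discrete vector d_D[i', j'] -/
def dD (N : ℕ) (i j : ℤ) : Fin 2 → ℝ :=
  (12:ℝ) • ((Real.sin (2*π*i*eps N) / eps N) • perp tl1
    + (Real.sin (2*π*(i+j)*eps N) / eps N) • perp tl2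
    + (Real.sin (2*π*j*eps N) / eps N) • perp tl3)

/-- the discrete scalar c_D[i', j'] -/
def cD (N : ℕ) (i j : ℤ) : ℝ :=
  36 - 8 * (Real.sin (π * i * eps N)^2 + Real.sin (π * (i+j) * eps N)^2
    + Real.sin (π * j * eps N)^2)

/-- the discrete Schur complement B_D[i', j'] = A_D − (1/c_D) d_D d_Dᵀ -/
def BD (ρ : ℝ) (N : ℕ) (i j : ℤ) : Matrix (Fin 2) (Fin 2) ℝ :=
  AD ρ N i j - (1 / cD N i j) • vecMulVec (dD N i j) (dD N i j)

/-- the continuum matrix A_C[i', j'] -/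
def AC (ρ : ℝ) (i j : ℤ) : Matrix (Fin 2) (Fin 2) ℝ :=
  (4 * π^2 * (i:ℝ)^2) • blk ρ tl1 + (4 * π^2 * ((i:ℝ)+(j:ℝ))^2) • blk ρ tl2
  + (4 * π^2 * (j:ℝ)^2) • blk ρ tl3

/-- the continuum vector d_C[i', j'] -/
def dC (i j : ℤ) : Fin 2 → ℝ :=
  (24 * π) • ((i:ℝ) • perp tl1 + ((i:ℝ)+(j:ℝ)) • perp tl2 + (j:ℝ) • perp tl3)

/-- the continuum Schur complement B_C[i', j'] = A_C − (1/36) d_C d_Cᵀ -/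
def BC (ρ : ℝ) (i j : ℤ) : Matrix (Fin 2) (Fin 2) ℝ :=
  AC ρ i j - (1/36 : ℝ) • vecMulVec (dC i j) (dC i j)

lemma sin_sq_lb (t : ℝ) (ht : |t| ≤ 1/2) : 4*t^2 ≤ Real.sin (π*t)^2 := by
  rcases le_or_gt 0 t with h | h
  · have h2 : t ≤ 1/2 := le_trans (le_abs_self t) ht
    have := Real.mul_le_sin (x := π*t) (by positivity) (by nlinarith [Real.pi_pos])
    have h2t : 2*t ≤ Real.sin (π*t) := by
      have hπ := Real.pi_pos
      calc 2*t = 2/π*(π*t) := by field_simp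
        _ ≤ _ := this
    nlinarith [h]
  · have h2 : -t ≤ 1/2 := le_trans (neg_le_abs t) ht
    have := Real.mul_le_sin (x := π*(-t)) (by nlinarith [Real.pi_pos]) (by nlinarith [Real.pi_pos])
    have h2t : 2*(-t) ≤ Real.sin (π*(-t)) := by
      have hπ := Real.pi_pos
      calc 2*(-t) = 2/π*(π*(-t)) := by field_simp
        _ ≤ _ := this
    have hs : Real.sin (π*(-t)) = - Real.sin (π*t) := by
      rw [show π*(-t) = -(π*t) by ring, Real.sin_neg]
    rw [hs] at h2t
    nlinarith

lemma sin_tri (a b : ℝ) : |Real.sin a| ≤ |Real.sin (a+b)| + |b| := by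
  have h : Real.sin a = Real.sin (a+b) * Real.cos b - Real.cos (a+b) * Real.sin b := by
    rw [← Real.sin_sub]; ring_nf
  calc |Real.sin a| ≤ |Real.sin (a+b) * Real.cos b| + |Real.cos (a+b) * Real.sin b| := by
        rw [h]; exact abs_sub _ _
    _ ≤ |Real.sin (a+b)| + |b| := by
        rw [abs_mul, abs_mul]
        have := Real.abs_cos_le_one b
        have := Real.abs_cos_le_one (a+b)
        have := Real.abs_sin_le_abs (x := b)
        have h1 := abs_nonneg (Real.sin (a+b))
        have h2 := abs_nonneg (Real.sin b)
        nlinarith [abs_nonneg (Real.cos (a+b)), abs_nonneg b]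

lemma stepA (e ρ s1 s2 s3 c1 c2 c3 u1 u2 u3 w1 w2 w3 : ℝ) (he : 0 < e) (hρ : 0 ≤ ρ)
    (h1 : s1^2+c1^2 = 1) (h2 : s2^2+c2^2 = 1) (h3 : s3^2+c3^2 = 1) :
    (4/e^2)*ρ*(s1^2*u1^2+s2^2*u2^2+s3^2*u3^2) ≤
    (4/e^2)*(s1^2*(ρ*u1^2+12*w1^2)+s2^2*(ρ*u2^2+12*w2^2)+s3^2*(ρ*u3^2+12*w3^2))
      - (1/(12+8*(c1^2+c2^2+c3^2))) * ((12/e)*(2*s1*c1*w1+2*s2*c2*w2+2*s3*c3*w3))^2 := by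
  set S := s1*c1*w1+s2*c2*w2+s3*c3*w3 with hS
  set W := s1^2*w1^2+s2^2*w2^2+s3^2*w3^2 with hW
  set c := 12+8*(c1^2+c2^2+c3^2) with hc'
  have hc : (0:ℝ) < c := by positivity
  have key : 12*S^2 ≤ W * c := by
    have lag : S^2 ≤ (c1^2+c2^2+c3^2) * W := by
      rw [hS, hW]
      nlinarith [sq_nonneg (c1*(s2*w2) - c2*(s1*w1)), sq_nonneg (c1*(s3*w3) - c3*(s1*w1)),
        sq_nonneg (c2*(s3*w3) - c3*(s2*w2))]
    have hc3 : c1^2+c2^2+c3^2 ≤ 3 := by nlinarith [sq_nonneg s1, sq_nonneg s2, sq_nonneg s3]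
    have hW0 : 0 ≤ W := by rw [hW]; positivity
    nlinarith [mul_le_mul_of_nonneg_right hc3 hW0]
  have h5 : (1/c) * ((12/e)*(2*s1*c1*w1+2*s2*c2*w2+2*s3*c3*w3))^2 ≤ (48/e^2)*W := by
    rw [one_div, inv_mul_le_iff₀ hc]
    rw [show ((12/e)*(2*s1*c1*w1+2*s2*c2*w2+2*s3*c3*w3))^2 = (48/e^2)*(12*S^2) by
      rw [hS]; field_simp; ring]
    rw [show c * ((48/e^2)*W) = (48/e^2)*(W*c) by ring]
    exact mul_le_mul_of_nonneg_left key (by positivity)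
  have hBA : (4/e^2)*(s1^2*(ρ*u1^2+12*w1^2)+s2^2*(ρ*u2^2+12*w2^2)+s3^2*(ρ*u3^2+12*w3^2))
      - (4/e^2)*ρ*(s1^2*u1^2+s2^2*u2^2+s3^2*u3^2) = (48/e^2)*W := by rw [hW]; ring
  linarith

lemma pairbound (m s a u w : ℝ) (ha : m ≤ s) (hb : m ≤ a) :
    m*(u^2+w^2) ≤ s*u^2 + a*w^2 := by
  nlinarith [sq_nonneg u, sq_nonneg w]

set_option maxHeartbeats 1000000 in
lemma stepB (x y e s1 s2 s3 v0 v1 r : ℝ) (he : 0 < e) (hr : r^2 = 3) (hr0 : 0 ≤ r)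
    (h1 : 4*(x*e)^2 ≤ s1^2) (h3 : 4*(y*e)^2 ≤ s3^2)
    (h21 : |s1| ≤ |s2| + π*( |y| * e)) (h23 : |s3| ≤ |s2| + π*( |x| * e)) :
    (e^2/200)*(x^2+y^2)*(v0^2+v1^2) ≤
      s1^2*(v0/2 - r*v1/2)^2 + s2^2*v0^2 + s3^2*(v0/2 + r*v1/2)^2 := by
  set u1 := v0/2 - r*v1/2 with hu1
  set u3 := v0/2 + r*v1/2 with hu3
  have hπ : π < 3.15 := Real.pi_lt_d2
  have hπ0 : 0 < π := Real.pi_pos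
  have p13 : (v0^2+v1^2)/2 ≤ u1^2 + u3^2 := by rw [hu1, hu3]; nlinarith [sq_nonneg v1]
  have p12 : (v0^2+v1^2)/2 ≤ u1^2 + v0^2 := by rw [hu1]; nlinarith [sq_nonneg (r*v0 - v1)]
  have p23 : (v0^2+v1^2)/2 ≤ v0^2 + u3^2 := by rw [hu3]; nlinarith [sq_nonneg (r*v0 + v1)]
  have habs1 : 2*( |x| * e) ≤ |s1| := by
    apply le_of_pow_le_pow_left₀ two_ne_zero (abs_nonneg s1)
    rw [sq_abs]
    calc (2*( |x| * e))^2 = 4*(x*e)^2 := by rw [mul_pow, mul_pow, mul_pow, sq_abs]; ring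
      _ ≤ s1^2 := h1
  have habs3 : 2*( |y| * e) ≤ |s3| := by
    apply le_of_pow_le_pow_left₀ two_ne_zero (abs_nonneg s3)
    rw [sq_abs]
    calc (2*( |y| * e))^2 = 4*(y*e)^2 := by rw [mul_pow, mul_pow, mul_pow, sq_abs]; ring
      _ ≤ s3^2 := h3
  have t1 : 0 ≤ s1^2*u1^2 := by positivity
  have t2 : 0 ≤ s2^2*v0^2 := by positivity
  have t3 : 0 ≤ s3^2*u3^2 := by positivity
  by_cases hAx : 400*x^2 < x^2+y^2
  · -- |x| small compared to |y| : use pair (2,3)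
    have hxy : 19*|x| ≤ |y| := by
      apply le_of_pow_le_pow_left₀ two_ne_zero (abs_nonneg y)
      rw [sq_abs, mul_pow, sq_abs]
      nlinarith [sq_nonneg x]
    have hab : 19*( |x| * e) ≤ |y| * e := by
      have := mul_le_mul_of_nonneg_right hxy he.le
      linarith [this]
    have hs2 : |y| * e ≤ |s2| := by
      have hb1 : π*( |x| * e) ≤ 3.15*( |x| * e) :=
        mul_le_mul_of_nonneg_right hπ.le (by positivity)
      have hB0 : (0:ℝ) ≤ |y| * e := by positivity
      linarith
    have hs2sq : (y*e)^2 ≤ s2^2 := by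
      have h0 : (0:ℝ) ≤ |y| * e := by positivity
      calc (y*e)^2 = ( |y| * e)^2 := by rw [mul_pow, mul_pow, sq_abs]
        _ ≤ |s2|^2 := pow_le_pow_left₀ h0 hs2 2
        _ = s2^2 := sq_abs s2
    have hy : (x^2+y^2)/2 ≤ y^2 := by linarith [sq_nonneg x]
    have hs3sq : (y*e)^2 ≤ s3^2 := by linarith [sq_nonneg (y*e)]
    have key := pairbound ((y*e)^2) (s2^2) (s3^2) v0 u3 hs2sq hs3sq
    have c1 : (y*e)^2*((v0^2+v1^2)/2) ≤ (y*e)^2*(v0^2+u3^2) :=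
      mul_le_mul_of_nonneg_left p23 (sq_nonneg _)
    have c2 : (e^2*((x^2+y^2)/2))*((v0^2+v1^2)/2) ≤ (y*e)^2*((v0^2+v1^2)/2) := by
      have h6 : e^2*((x^2+y^2)/2) ≤ e^2*y^2 := mul_le_mul_of_nonneg_left hy (sq_nonneg e)
      have h7 : (y*e)^2 = e^2*y^2 := by ring
      apply mul_le_mul_of_nonneg_right _ (by positivity)
      rw [h7]; exact h6
    have h0 : 0 ≤ e^2*((x^2+y^2)*(v0^2+v1^2)) := by positivity
    nlinarith [key, c1, c2, t1, h0]
  · by_cases hAy : 400*y^2 < x^2+y^2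
    · -- |y| small : pair (1,2)
      have hxy : 19*|y| ≤ |x| := by
        apply le_of_pow_le_pow_left₀ two_ne_zero (abs_nonneg x)
        rw [sq_abs, mul_pow, sq_abs]
        nlinarith [sq_nonneg y]
      have hab : 19*( |y| * e) ≤ |x| * e := by
        have := mul_le_mul_of_nonneg_right hxy he.le
        linarith [this]
      have hs2 : |x| * e ≤ |s2| := by
        have hb1 : π*( |y| * e) ≤ 3.15*( |y| * e) :=
          mul_le_mul_of_nonneg_right hπ.le (by positivity)
        have hB0 : (0:ℝ) ≤ |x| * e := by positivity
        linarith
      have hs2sq : (x*e)^2 ≤ s2^2 := by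
        have h0 : (0:ℝ) ≤ |x| * e := by positivity
        calc (x*e)^2 = ( |x| * e)^2 := by rw [mul_pow, mul_pow, sq_abs]
          _ ≤ |s2|^2 := pow_le_pow_left₀ h0 hs2 2
          _ = s2^2 := sq_abs s2
      have hx : (x^2+y^2)/2 ≤ x^2 := by linarith [sq_nonneg y]
      have hs1sq : (x*e)^2 ≤ s1^2 := by linarith [sq_nonneg (x*e)]
      have key := pairbound ((x*e)^2) (s1^2) (s2^2) u1 v0 hs1sq hs2sq
      have c1 : (x*e)^2*((v0^2+v1^2)/2) ≤ (x*e)^2*(u1^2+v0^2) :=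
        mul_le_mul_of_nonneg_left p12 (sq_nonneg _)
      have c2 : (e^2*((x^2+y^2)/2))*((v0^2+v1^2)/2) ≤ (x*e)^2*((v0^2+v1^2)/2) := by
        have h6 : e^2*((x^2+y^2)/2) ≤ e^2*x^2 := mul_le_mul_of_nonneg_left hx (sq_nonneg e)
        have h7 : (x*e)^2 = e^2*x^2 := by ring
        apply mul_le_mul_of_nonneg_right _ (by positivity)
        rw [h7]; exact h6
      have h0 : 0 ≤ e^2*((x^2+y^2)*(v0^2+v1^2)) := by positivity
      nlinarith [key, c1, c2, t3, h0]
    · -- both comparable : pair (1,3)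
      push_neg at hAx hAy
      have hm : (0:ℝ) ≤ e^2*((x^2+y^2)/100) := by positivity
      have hx' : e^2*((x^2+y^2)/400) ≤ e^2*x^2 :=
        mul_le_mul_of_nonneg_left (by linarith) (sq_nonneg e)
      have hy' : e^2*((x^2+y^2)/400) ≤ e^2*y^2 :=
        mul_le_mul_of_nonneg_left (by linarith) (sq_nonneg e)
      have e1 : (x*e)^2 = e^2*x^2 := by ring
      have e3 : (y*e)^2 = e^2*y^2 := by ring
      have hs1sq : e^2*((x^2+y^2)/100) ≤ s1^2 := by
        rw [e1] at h1; linarith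
      have hs3sq : e^2*((x^2+y^2)/100) ≤ s3^2 := by
        rw [e3] at h3; linarith
      have key := pairbound (e^2*((x^2+y^2)/100)) (s1^2) (s3^2) u1 u3 hs1sq hs3sq
      have c1 : (e^2*((x^2+y^2)/100))*((v0^2+v1^2)/2) ≤ (e^2*((x^2+y^2)/100))*(u1^2+u3^2) :=
        mul_le_mul_of_nonneg_left p13 hm
      nlinarith [key, c1, t2]

lemma BD_val (ρ : ℝ) (N : ℕ) (i j : ℤ) (v : Fin 2 → ℝ) :
    v ⬝ᵥ (BD ρ N i j).mulVec v =
    (4/(eps N)^2) * (Real.sin (π * i * eps N)^2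
        * (ρ*(v 0/2 - Real.sqrt 3*v 1/2)^2 + 12*(Real.sqrt 3*v 0/2 + v 1/2)^2)
      + Real.sin (π * ((i:ℝ)+(j:ℝ)) * eps N)^2 * (ρ*(v 0)^2 + 12*(v 1)^2)
      + Real.sin (π * j * eps N)^2
        * (ρ*(v 0/2 + Real.sqrt 3*v 1/2)^2 + 12*(-(Real.sqrt 3)*v 0/2 + v 1/2)^2))
    - (1 / cD N i j) * ((12/eps N) * (Real.sin (2*π*i*eps N)*(Real.sqrt 3*v 0/2 + v 1/2)
        + Real.sin (2*π*((i:ℝ)+(j:ℝ))*eps N)*(v 1)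
        + Real.sin (2*π*j*eps N)*(-(Real.sqrt 3)*v 0/2 + v 1/2)))^2 := by
  simp [BD, AD, dD, blk, perp, tl1, tl2, tl3, vecMulVec, mulVec, dotProduct,
    Fin.sum_univ_two, Matrix.sub_apply, Matrix.add_apply, Matrix.smul_apply]
  ring

set_option maxHeartbeats 1000000 in
/-- coercivity of the discrete Schur complement B_D:
for every ρ* > 0 there is C > 0 depending only on ρ* such that for every N ≥ 2
(ε = 1/N), every (i', j') ∈ F_N and every v ∈ ℝ²,
v·(B_D[i',j'] v) ≥ C((i')² + (j')²)|v|²; in particular the smallest eigenvalue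
of B_D[i',j'] is at least C((i')² + (j')²). -/
theorem coercive_BD (ρ : ℝ) (hρ : 0 < ρ) :
    ∃ C > 0, ∀ N : ℕ, 2 ≤ N → ∀ i j : ℤ, inFreq N i j → ∀ v : Fin 2 → ℝ,
      C * ((i:ℝ)^2 + (j:ℝ)^2) * (v ⬝ᵥ v) ≤ v ⬝ᵥ (BD ρ N i j).mulVec v := by
  refine ⟨ρ/50, by positivity, ?_⟩
  intro N hN i j hF v
  obtain ⟨hF1, hF2, hF3, hF4⟩ := hF
  have hN0 : (0:ℝ) < N := by
    have : 0 < N := by omega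
    exact_mod_cast this
  have he : 0 < eps N := by unfold eps; exact one_div_pos.mpr hN0
  have he' : eps N ≠ 0 := ne_of_gt he
  -- bounds |i| ≤ N/2, |j| ≤ N/2
  have hi2 : -(N:ℝ) ≤ 2*(i:ℝ) ∧ 2*(i:ℝ) ≤ (N:ℝ) := by
    constructor
    · exact_mod_cast hF1
    · exact_mod_cast le_of_lt hF2
  have hj2 : -(N:ℝ) ≤ 2*(j:ℝ) ∧ 2*(j:ℝ) ≤ (N:ℝ) := by
    constructor
    · exact_mod_cast hF3
    · exact_mod_cast le_of_lt hF4
  have hiabs : |(i:ℝ)| ≤ (N:ℝ)/2 := by rw [abs_le]; constructor <;> linarith [hi2.1, hi2.2]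
  have hjabs : |(j:ℝ)| ≤ (N:ℝ)/2 := by rw [abs_le]; constructor <;> linarith [hj2.1, hj2.2]
  have hie : |(i:ℝ) * eps N| ≤ 1/2 := by
    rw [abs_mul, abs_of_nonneg he.le]
    calc |(i:ℝ)| * eps N ≤ ((N:ℝ)/2) * eps N :=
          mul_le_mul_of_nonneg_right hiabs he.le
      _ = 1/2 := by unfold eps; field_simp
  have hje : |(j:ℝ) * eps N| ≤ 1/2 := by
    rw [abs_mul, abs_of_nonneg he.le]
    calc |(j:ℝ)| * eps N ≤ ((N:ℝ)/2) * eps N :=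
          mul_le_mul_of_nonneg_right hjabs he.le
      _ = 1/2 := by unfold eps; field_simp
  -- sine lower bounds
  have h1 : 4*((i:ℝ)*eps N)^2 ≤ Real.sin (π * i * eps N)^2 := by
    have := sin_sq_lb ((i:ℝ)*eps N) hie
    rwa [← mul_assoc] at this
  have h3 : 4*((j:ℝ)*eps N)^2 ≤ Real.sin (π * j * eps N)^2 := by
    have := sin_sq_lb ((j:ℝ)*eps N) hje
    rwa [← mul_assoc] at this
  -- triangle inequalities
  have habsj : |π*(j:ℝ)*eps N| = π*( |(j:ℝ)| * eps N) := by
    rw [abs_mul, abs_mul, abs_of_nonneg Real.pi_pos.le, abs_of_nonneg he.le, mul_assoc]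
  have habsi : |π*(i:ℝ)*eps N| = π*( |(i:ℝ)| * eps N) := by
    rw [abs_mul, abs_mul, abs_of_nonneg Real.pi_pos.le, abs_of_nonneg he.le, mul_assoc]
  have h21 : |Real.sin (π * i * eps N)| ≤
      |Real.sin (π * ((i:ℝ)+(j:ℝ)) * eps N)| + π*( |(j:ℝ)| * eps N) := by
    have h := sin_tri (π*(i:ℝ)*eps N) (π*(j:ℝ)*eps N)
    rw [show π*(i:ℝ)*eps N + π*(j:ℝ)*eps N = π*((i:ℝ)+(j:ℝ))*eps N from by ring,
      habsj] at h
    exact h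
  have h23 : |Real.sin (π * j * eps N)| ≤
      |Real.sin (π * ((i:ℝ)+(j:ℝ)) * eps N)| + π*( |(i:ℝ)| * eps N) := by
    have h := sin_tri (π*(j:ℝ)*eps N) (π*(i:ℝ)*eps N)
    rw [show π*(j:ℝ)*eps N + π*(i:ℝ)*eps N = π*((i:ℝ)+(j:ℝ))*eps N from by ring,
      habsi] at h
    exact h
  -- double angle and cD
  have hd1 : Real.sin (2*π*(i:ℝ)*eps N)
      = 2 * Real.sin (π * i * eps N) * Real.cos (π * i * eps N) := by
    rw [show 2*π*(i:ℝ)*eps N = 2*(π*(i:ℝ)*eps N) from by ring, Real.sin_two_mul]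
  have hd2 : Real.sin (2*π*((i:ℝ)+(j:ℝ))*eps N)
      = 2 * Real.sin (π * ((i:ℝ)+(j:ℝ)) * eps N) * Real.cos (π * ((i:ℝ)+(j:ℝ)) * eps N) := by
    rw [show 2*π*((i:ℝ)+(j:ℝ))*eps N = 2*(π*((i:ℝ)+(j:ℝ))*eps N) from by ring,
      Real.sin_two_mul]
  have hd3 : Real.sin (2*π*(j:ℝ)*eps N)
      = 2 * Real.sin (π * j * eps N) * Real.cos (π * j * eps N) := by
    rw [show 2*π*(j:ℝ)*eps N = 2*(π*(j:ℝ)*eps N) from by ring, Real.sin_two_mul]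
  have sc1 := Real.sin_sq_add_cos_sq (π * (i:ℝ) * eps N)
  have sc2 := Real.sin_sq_add_cos_sq (π * ((i:ℝ)+(j:ℝ)) * eps N)
  have sc3 := Real.sin_sq_add_cos_sq (π * (j:ℝ) * eps N)
  have hcD : cD N i j = 12 + 8*(Real.cos (π * i * eps N)^2
      + Real.cos (π * ((i:ℝ)+(j:ℝ)) * eps N)^2 + Real.cos (π * j * eps N)^2) := by
    unfold cD; push_cast; linarith
  have hr : Real.sqrt 3 ^ 2 = 3 := Real.sq_sqrt (by norm_num)
  have hr0 : (0:ℝ) ≤ Real.sqrt 3 := Real.sqrt_nonneg 3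
  have hvv : v ⬝ᵥ v = (v 0)^2 + (v 1)^2 := by
    simp [dotProduct, Fin.sum_univ_two]; ring
  rw [BD_val, hcD, hd1, hd2, hd3, hvv]
  have hB := stepB (i:ℝ) (j:ℝ) (eps N) (Real.sin (π * i * eps N))
    (Real.sin (π * ((i:ℝ)+(j:ℝ)) * eps N)) (Real.sin (π * j * eps N))
    (v 0) (v 1) (Real.sqrt 3) he hr hr0 h1 h3 h21 h23
  have hA := stepA (eps N) ρ (Real.sin (π * i * eps N))
    (Real.sin (π * ((i:ℝ)+(j:ℝ)) * eps N)) (Real.sin (π * j * eps N))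
    (Real.cos (π * i * eps N)) (Real.cos (π * ((i:ℝ)+(j:ℝ)) * eps N))
    (Real.cos (π * j * eps N))
    (v 0/2 - Real.sqrt 3*v 1/2) (v 0) (v 0/2 + Real.sqrt 3*v 1/2)
    (Real.sqrt 3*v 0/2 + v 1/2) (v 1) (-(Real.sqrt 3)*v 0/2 + v 1/2)
    he hρ.le sc1 sc2 sc3
  refine le_trans ?_ hA
  have hmul := mul_le_mul_of_nonneg_left hB
    (by positivity : (0:ℝ) ≤ 4/(eps N)^2*ρ)
  calc ρ/50 * ((i:ℝ)^2 + (j:ℝ)^2) * ((v 0)^2 + (v 1)^2)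
      = 4/(eps N)^2*ρ * ((eps N)^2/200*((i:ℝ)^2+(j:ℝ)^2)*((v 0)^2+(v 1)^2)) := by
        field_simp; ring
    _ ≤ _ := hmul
end
end

section
/- For every pair of unit vectors m₁, m₂ ∈ ℝ² that are not parallel (m₁ ≠ m₂ and m₁ ≠ −m₂), there exists a constant C > 0 depending only on m₁ and m₂ such that for all integers i', j' and every v ∈ ℝ²: (i')²·(m₁·v)² + (j')²·(m₂·v)² + ((i'·m₁⊥ − j'·m₂⊥)·v)² ≥ C·((i')² + (j')²)·|v|². -/
set_option maxHeartbeats 1000000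

noncomputable section
open Real Matrix Finset

/-- nonnegativity of a 2x2 PSD quadratic form -/
lemma quad_nonneg (α β γ a p : ℝ) (hα : 0 ≤ α) (hγ : 0 ≤ γ) (h : β^2 ≤ α*γ) :
    0 ≤ α*a^2 + 2*β*(a*p) + γ*p^2 := by
  rcases eq_or_lt_of_le hα with h0 | h0
  · have hβ : β = 0 := by nlinarith [sq_nonneg β]
    subst hβ
    nlinarith [mul_nonneg hγ (sq_nonneg p), sq_nonneg a, mul_nonneg hα (sq_nonneg a)]
  · nlinarith [sq_nonneg (α*a + β*p), mul_nonneg (sub_nonneg.2 h) (sq_nonneg p)]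

lemma det_lb (c s i j : ℝ) (h1 : c^2 + s^2 = 1) :
    s^2/18 * (i^2+j^2)^2 ≤ j^4*s^2 + (i^2+j^2)*(i-j*c)^2 := by
  by_cases hd : s^2*(i^2+j^2)/9 ≤ (i-j*c)^2
  · nlinarith [mul_le_mul_of_nonneg_left hd (show (0:ℝ) ≤ i^2+j^2 by positivity),
      mul_nonneg (mul_nonneg (sq_nonneg j) (sq_nonneg j)) (sq_nonneg s),
      mul_nonneg (sq_nonneg s) (sq_nonneg (i^2+j^2))]
  · push_neg at hd
    have h2 : 0 ≤ 3*j^2 - 7/9*(i^2+j^2) := by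
      nlinarith [sq_nonneg (i-2*j*c), sq_nonneg c, sq_nonneg s, sq_nonneg i, sq_nonneg j,
        mul_nonneg (sq_nonneg s) (sq_nonneg s), sq_nonneg (i^2+j^2),
        mul_nonneg (sq_nonneg c) (add_nonneg (sq_nonneg i) (sq_nonneg j))]
    have aux : 0 ≤ s^2*(3*j^2 + 7/9*(i^2+j^2)) := by positivity
    nlinarith [mul_nonneg aux h2, mul_nonneg (sq_nonneg s) (sq_nonneg (i^2+j^2)),
      mul_nonneg (add_nonneg (sq_nonneg i) (sq_nonneg j)) (sq_nonneg (i-j*c))]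

lemma key_ineq (c s i j a p : ℝ) (h1 : c^2 + s^2 = 1) :
    s^2/72 * (i^2+j^2) * (a^2+p^2) ≤
      i^2*a^2 + j^2*(c*a+s*p)^2 + (i*p - j*(c*p-s*a))^2 := by
  have hs1 : s^2 ≤ 1 := by nlinarith [sq_nonneg c]
  rcases eq_or_lt_of_le (show (0:ℝ) ≤ i^2+j^2 by positivity) with ht0 | ht0
  · have hi : i = 0 := by nlinarith [sq_nonneg i, sq_nonneg j]
    have hj : j = 0 := by nlinarith [sq_nonneg i, sq_nonneg j]
    simp only [hi, hj]
    norm_num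
    try positivity
  · have hdet := det_lb c s i j h1
    have hT : (i^2+j^2) + (j^2*s^2 + (i-j*c)^2) ≤ 4*(i^2+j^2) := by
      nlinarith [sq_nonneg (i+j*c), mul_nonneg (sq_nonneg j) (sq_nonneg c),
        mul_nonneg (sq_nonneg j) (sq_nonneg s), sq_nonneg c]
    have hν : (0:ℝ) ≤ s^2*(i^2+j^2)/72 := by positivity
    have hνT : s^2*(i^2+j^2)/72 * ((i^2+j^2) + (j^2*s^2 + (i-j*c)^2)) ≤
        j^4*s^2 + (i^2+j^2)*(i-j*c)^2 := by
      nlinarith [mul_le_mul_of_nonneg_left hT hν]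
    have hA : s^2*(i^2+j^2)/72 ≤ i^2+j^2 := by nlinarith
    have hD : s^2*(i^2+j^2)/72 ≤ j^2*s^2 + (i-j*c)^2 := by
      have hdet2 : j^4*s^2 + (i^2+j^2)*(i-j*c)^2 ≤
          (i^2+j^2)*(j^2*s^2 + (i-j*c)^2) := by
        nlinarith [mul_nonneg (sq_nonneg i) (mul_nonneg (sq_nonneg j) (sq_nonneg s))]
      have h3 : s^2*(i^2+j^2)/72 * (i^2+j^2) ≤ (i^2+j^2)*(j^2*s^2 + (i-j*c)^2) := by
        nlinarith [mul_nonneg hν (add_nonneg (mul_nonneg (sq_nonneg j) (sq_nonneg s)) (sq_nonneg (i-j*c)))]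
      have h4 : (i^2+j^2) * (s^2*(i^2+j^2)/72) ≤ (i^2+j^2) * (j^2*s^2 + (i-j*c)^2) := by
        nlinarith [h3]
      exact le_of_mul_le_mul_left h4 ht0
    have hdisc : (i*j*s)^2 ≤
        ((i^2+j^2) - s^2*(i^2+j^2)/72) * ((j^2*s^2 + (i-j*c)^2) - s^2*(i^2+j^2)/72) := by
      nlinarith [hνT, sq_nonneg (s^2*(i^2+j^2)/72)]
    have hq := quad_nonneg ((i^2+j^2) - s^2*(i^2+j^2)/72) (i*j*s)
      ((j^2*s^2 + (i-j*c)^2) - s^2*(i^2+j^2)/72) a p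
      (by linarith) (by linarith) hdisc
    nlinarith [hq, mul_nonneg (sq_nonneg j) (sq_nonneg a)]

/-- for unit, non-parallel vectors m₁, m₂ in ℝ², there is C > 0
depending only on m₁, m₂ such that for all integers i', j' and every v ∈ ℝ²,
(i')²(m₁·v)² + (j')²(m₂·v)² + ((i' m₁⊥ − j' m₂⊥)·v)² ≥ C((i')² + (j')²)|v|². -/
theorem continuum_coercive_lemma (m₁ m₂ : Fin 2 → ℝ)
    (hm₁ : m₁ ⬝ᵥ m₁ = 1) (hm₂ : m₂ ⬝ᵥ m₂ = 1)
    (hpar : m₁ ≠ m₂ ∧ m₁ ≠ -m₂) :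
    ∃ C > 0, ∀ i j : ℤ, ∀ v : Fin 2 → ℝ,
      C * ((i:ℝ)^2 + (j:ℝ)^2) * (v ⬝ᵥ v) ≤
        (i:ℝ)^2 * (m₁ ⬝ᵥ v)^2 + (j:ℝ)^2 * (m₂ ⬝ᵥ v)^2
        + (((i:ℝ) • perp m₁ - (j:ℝ) • perp m₂) ⬝ᵥ v)^2 := by
  simp only [dotProduct, Fin.sum_univ_two] at hm₁ hm₂
  have hcs : (m₁ 0 * m₂ 0 + m₁ 1 * m₂ 1)^2 + (m₁ 0 * m₂ 1 - m₁ 1 * m₂ 0)^2 = 1 := by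
    linear_combination (m₂ 0 * m₂ 0 + m₂ 1 * m₂ 1) * hm₁ + hm₂
  have hs : m₁ 0 * m₂ 1 - m₁ 1 * m₂ 0 ≠ 0 := by
    intro hs0
    have hc2 : (m₁ 0 * m₂ 0 + m₁ 1 * m₂ 1)^2 = 1 := by
      rw [hs0] at hcs; linarith [hcs]
    have h5 : (m₁ 0 * m₂ 0 + m₁ 1 * m₂ 1 - 1) * (m₁ 0 * m₂ 0 + m₁ 1 * m₂ 1 + 1) = 0 := by
      linear_combination hc2
    rcases mul_eq_zero.mp h5 with h | h
    · have hc : m₁ 0 * m₂ 0 + m₁ 1 * m₂ 1 = 1 := by linarith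
      apply hpar.1
      funext k
      fin_cases k
      · show m₁ 0 = m₂ 0
        linear_combination (-(m₁ 0)) * hc + (m₂ 0) * hm₁ + (m₁ 1) * hs0
      · show m₁ 1 = m₂ 1
        linear_combination (-(m₁ 1)) * hc + (m₂ 1) * hm₁ - (m₁ 0) * hs0
    · have hc : m₁ 0 * m₂ 0 + m₁ 1 * m₂ 1 = -1 := by linarith
      apply hpar.2
      funext k
      fin_cases k
      · show m₁ 0 = -m₂ 0
        linear_combination (m₁ 0) * hc - (m₂ 0) * hm₁ - (m₁ 1) * hs0
      · show m₁ 1 = -m₂ 1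
        linear_combination (m₁ 1) * hc - (m₂ 1) * hm₁ + (m₁ 0) * hs0
  refine ⟨(m₁ 0 * m₂ 1 - m₁ 1 * m₂ 0)^2/72, by positivity, ?_⟩
  intro i j v
  simp only [dotProduct, Fin.sum_univ_two, perp, Matrix.cons_val_zero, Matrix.cons_val_one,
    Matrix.head_cons, Pi.sub_apply, Pi.smul_apply, smul_eq_mul]
  have hk := key_ineq (m₁ 0 * m₂ 0 + m₁ 1 * m₂ 1) (m₁ 0 * m₂ 1 - m₁ 1 * m₂ 0)
    (i:ℝ) (j:ℝ) (m₁ 0 * v 0 + m₁ 1 * v 1) (-(m₁ 1) * v 0 + m₁ 0 * v 1) hcs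
  have hb : (m₁ 0 * m₂ 0 + m₁ 1 * m₂ 1) * (m₁ 0 * v 0 + m₁ 1 * v 1)
      + (m₁ 0 * m₂ 1 - m₁ 1 * m₂ 0) * (-(m₁ 1) * v 0 + m₁ 0 * v 1)
      = m₂ 0 * v 0 + m₂ 1 * v 1 := by
    linear_combination (m₂ 0 * v 0 + m₂ 1 * v 1) * hm₁
  have hq2 : (m₁ 0 * m₂ 0 + m₁ 1 * m₂ 1) * (-(m₁ 1) * v 0 + m₁ 0 * v 1)
      - (m₁ 0 * m₂ 1 - m₁ 1 * m₂ 0) * (m₁ 0 * v 0 + m₁ 1 * v 1)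
      = -(m₂ 1) * v 0 + m₂ 0 * v 1 := by
    linear_combination (-(m₂ 1) * v 0 + m₂ 0 * v 1) * hm₁
  have hv : (m₁ 0 * v 0 + m₁ 1 * v 1)^2 + (-(m₁ 1) * v 0 + m₁ 0 * v 1)^2
      = v 0 * v 0 + v 1 * v 1 := by
    linear_combination (v 0 * v 0 + v 1 * v 1) * hm₁
  rw [hb, hq2, hv] at hk
  nlinarith [hk]
end
end

section
/- For all non-negative integers m, n, m°, n° there exists a constant C > 0 depending only on m, n, m°, n° such that for every integer N ≥ 2 with ε = 1/N and all integers i' ≥ 0, j' ≥ 0 with i' + j' ≥ 1: | (sin^m(π i' ε)·sin^n(π j' ε)/ε^{m+n})·cos^{m°}(π i' ε)·cos^{n°}(π j' ε) − (π i')^m·(π j')^n | is bounded by C·ε²·(j')^{n+2} if m = m° = 0 and n ≥ 1; by C·ε²·(i')^{m+2} if m ≥ 1 and n = n° = 0; and by C·ε²·( (i')^{m+2}·(j')^{n} + (i')^{m}·(j')^{n+2} ) in all remaining cases. -/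
noncomputable section
open Real

/-!
From `|x - sin x| ≤ |x|³/6`, `|1 - cos x| ≤ x²/2` and
`|uᵏ - vᵏ| ≤ k |u - v| max(|u|,|v|)ᵏ⁻¹` one gets, for every real `x`,
`|sinᵃ x cosᵇ x - xᵃ| ≤ (a/6 + b/2) |x|ᵃ⁺²`, and a product of two such factors is handled by
`uv - pq = u(v - q) + q(u - p)`. The bound is homogeneous: at `x = s ε` the error is `ε^(m+n+2)`
times a polynomial in `s`, so dividing by `ε^(m+n)` leaves the factor `ε²`. When `m = m° = 0`
the coefficient `m/6 + m°/2` of the `i`-term vanishes, which gives the special cases.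
-/

theorem abs_sin_pow_sub_pow_le (a : ℕ) (x : ℝ) : |sin x ^ a - x ^ a| ≤ a / 6 * |x| ^ (a + 2) := by
  refine (abs_pow_sub_pow_le ..).trans ?_
  rw [max_eq_right abs_sin_le_abs, abs_sub_comm]
  rcases a with _ | a
  · simp
  rw [Nat.add_sub_cancel]
  calc |x - sin x| * ↑(a + 1) * |x| ^ a ≤ |x| ^ 3 / 6 * ↑(a + 1) * |x| ^ a := by
        gcongr; exact abs_sub_sin_le x
    _ = ↑(a + 1) / 6 * |x| ^ (a + 1 + 2) := by ring

theorem abs_cos_pow_sub_one_le (b : ℕ) (x : ℝ) : |cos x ^ b - 1| ≤ b / 2 * x ^ 2 := by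
  have hcos : |cos x - 1| ≤ x ^ 2 / 2 := by
    rw [abs_le]
    constructor <;> linarith [cos_le_one x, one_sub_sq_div_two_le_cos (x := x), sq_nonneg x]
  calc |cos x ^ b - 1| = |cos x ^ b - 1 ^ b| := by rw [one_pow]
    _ ≤ |cos x - 1| * b * max |cos x| |1| ^ (b - 1) := abs_pow_sub_pow_le ..
    _ ≤ x ^ 2 / 2 * b * 1 := by
        rw [abs_one, max_eq_right (abs_cos_le_one x), one_pow]; gcongr
    _ = b / 2 * x ^ 2 := by ring

theorem abs_sin_pow_mul_cos_pow_le (a b : ℕ) (x : ℝ) : |sin x ^ a * cos x ^ b| ≤ |x| ^ a := by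
  rw [abs_mul, abs_pow, abs_pow]
  calc |sin x| ^ a * |cos x| ^ b ≤ |x| ^ a * 1 :=
        mul_le_mul (pow_le_pow_left₀ (abs_nonneg _) abs_sin_le_abs a)
          (pow_le_one₀ (abs_nonneg _) (abs_cos_le_one x)) (by positivity) (by positivity)
    _ = |x| ^ a := mul_one _

theorem abs_sin_pow_mul_cos_pow_sub_pow_le (a b : ℕ) (x : ℝ) :
    |sin x ^ a * cos x ^ b - x ^ a| ≤ (a / 6 + b / 2) * |x| ^ (a + 2) := by
  calc |sin x ^ a * cos x ^ b - x ^ a| = |sin x ^ a * (cos x ^ b - 1) + (sin x ^ a - x ^ a)| := by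
        ring_nf
    _ ≤ |sin x| ^ a * |cos x ^ b - 1| + |sin x ^ a - x ^ a| := by
        rw [← abs_pow, ← abs_mul]; exact abs_add_le _ _
    _ ≤ |x| ^ a * (b / 2 * x ^ 2) + a / 6 * |x| ^ (a + 2) := by
        gcongr ?_ ^ _ * ?_ + ?_
        · exact abs_sin_le_abs
        · exact abs_cos_pow_sub_one_le b x
        · exact abs_sin_pow_sub_pow_le a x
    _ = (a / 6 + b / 2) * |x| ^ (a + 2) := by rw [← sq_abs]; ring

theorem abs_sin_cos_mul_sin_cos_sub_le (m m' n n' : ℕ) (x y : ℝ) :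
    |sin x ^ m * cos x ^ m' * (sin y ^ n * cos y ^ n') - x ^ m * y ^ n|
      ≤ (m / 6 + m' / 2) * |x| ^ (m + 2) * |y| ^ n
        + (n / 6 + n' / 2) * |x| ^ m * |y| ^ (n + 2) := by
  calc _ = |sin x ^ m * cos x ^ m' * (sin y ^ n * cos y ^ n' - y ^ n)
          + y ^ n * (sin x ^ m * cos x ^ m' - x ^ m)| := by ring_nf
    _ ≤ |sin x ^ m * cos x ^ m'| * |sin y ^ n * cos y ^ n' - y ^ n|
          + |y| ^ n * |sin x ^ m * cos x ^ m' - x ^ m| := by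
        rw [← abs_pow, ← abs_mul, ← abs_mul]; exact abs_add_le _ _
    _ ≤ |x| ^ m * ((n / 6 + n' / 2) * |y| ^ (n + 2))
          + |y| ^ n * ((m / 6 + m' / 2) * |x| ^ (m + 2)) := by
        gcongr
        · exact abs_sin_pow_mul_cos_pow_le m m' x
        · exact abs_sin_pow_mul_cos_pow_sub_pow_le n n' y
        · exact abs_sin_pow_mul_cos_pow_sub_pow_le m m' x
    _ = _ := by ring

theorem abs_sin_cos_mul_sin_cos_scaled_sub_le (m m' n n' : ℕ) {e : ℝ} (he : e ≠ 0) (s t : ℝ) :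
    |sin (s * e) ^ m * sin (t * e) ^ n / e ^ (m + n) * cos (s * e) ^ m' * cos (t * e) ^ n'
        - s ^ m * t ^ n|
      ≤ e ^ 2 * ((m / 6 + m' / 2) * |s| ^ (m + 2) * |t| ^ n
        + (n / 6 + n' / 2) * |s| ^ m * |t| ^ (n + 2)) := by
  have hsplit :
      sin (s * e) ^ m * sin (t * e) ^ n / e ^ (m + n) * cos (s * e) ^ m' * cos (t * e) ^ n'
        - s ^ m * t ^ n
      = (sin (s * e) ^ m * cos (s * e) ^ m' * (sin (t * e) ^ n * cos (t * e) ^ n')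
        - (s * e) ^ m * (t * e) ^ n) / e ^ (m + n) := by
    field_simp; ring
  have hpos : 0 < |e| ^ (m + n) := by positivity
  rw [hsplit, abs_div, abs_pow, div_le_iff₀ hpos]
  refine (abs_sin_cos_mul_sin_cos_sub_le m m' n n' _ _).trans_eq ?_
  rw [abs_mul, abs_mul, ← sq_abs e]
  ring

/-- Lemma `sin cos`: for all non-negative integers m, n, m°, n°
there is C > 0 depending only on m, n, m°, n° such that for every N ≥ 2
(ε = 1/N) and all integers i' ≥ 0, j' ≥ 0 with i' + j' ≥ 1, the quantity
| sin^m(π i' ε) sin^n(π j' ε) / ε^(m+n) · cos^{m°}(π i' ε) cos^{n°}(π j' ε)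
  − (π i')^m (π j')^n |
is bounded by C ε² (j')^{n+2} if m = m° = 0 and n ≥ 1, by C ε² (i')^{m+2} if
m ≥ 1 and n = n° = 0, and by C ε² ((i')^{m+2} (j')^n + (i')^m (j')^{n+2})
otherwise. (Zeroth powers equal 1, in particular 0⁰ = 1.) -/
theorem sin_cos_estimate (m n m' n' : ℕ) :
    ∃ C > 0, ∀ N : ℕ, 2 ≤ N → ∀ i j : ℤ, 0 ≤ i → 0 ≤ j → 1 ≤ i + j →
      |Real.sin (π * i * eps N) ^ m * Real.sin (π * j * eps N) ^ n / (eps N) ^ (m + n)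
          * Real.cos (π * i * eps N) ^ m' * Real.cos (π * j * eps N) ^ n'
        - (π * i) ^ m * (π * j) ^ n|
      ≤ if m = 0 ∧ m' = 0 ∧ 1 ≤ n then C * (eps N)^2 * (j:ℝ)^(n+2)
        else if 1 ≤ m ∧ n = 0 ∧ n' = 0 then C * (eps N)^2 * (i:ℝ)^(m+2)
        else C * (eps N)^2 * ((i:ℝ)^(m+2) * (j:ℝ)^n + (i:ℝ)^m * (j:ℝ)^(n+2)) := by
  set K : ℝ := m / 6 + m' / 2 + (n / 6 + n' / 2) + 1 with hK
  refine ⟨π ^ (m + n + 2) * K, by positivity, fun N hN i j hi hj _ => ?_⟩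
  have he : eps N ≠ 0 := one_div_ne_zero (Nat.cast_ne_zero.2 (by omega))
  have hi' : (0 : ℝ) ≤ i := by exact_mod_cast hi
  have hj' : (0 : ℝ) ≤ j := by exact_mod_cast hj
  have key := abs_sin_cos_mul_sin_cos_scaled_sub_le m m' n n' he (π * i) (π * j)
  rw [abs_of_nonneg (by positivity : 0 ≤ π * i), abs_of_nonneg (by positivity : 0 ≤ π * j)]
    at key
  set e := eps N
  have hc₁ : (m / 6 + m' / 2 : ℝ) ≤ K := by
    rw [hK]; linarith [show (0 : ℝ) ≤ n / 6 + n' / 2 by positivity]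
  have hc₂ : (n / 6 + n' / 2 : ℝ) ≤ K := by
    rw [hK]; linarith [show (0 : ℝ) ≤ m / 6 + m' / 2 by positivity]
  refine key.trans (le_of_eq_of_le (by ring) (?_ : π ^ (m + n + 2) * e ^ 2 *
    ((m / 6 + m' / 2) * (i ^ (m + 2) * j ^ n) + (n / 6 + n' / 2) * (i ^ m * j ^ (n + 2))) ≤ _))
  split_ifs with h₁ h₂
  · obtain ⟨rfl, rfl, -⟩ := h₁
    calc _ = π ^ (0 + n + 2) * e ^ 2 * ((n / 6 + n' / 2) * j ^ (n + 2)) := by simp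
      _ ≤ π ^ (0 + n + 2) * e ^ 2 * (K * j ^ (n + 2)) := by gcongr
      _ = _ := by ring
  · obtain ⟨-, rfl, rfl⟩ := h₂
    calc _ = π ^ (m + 0 + 2) * e ^ 2 * ((m / 6 + m' / 2) * i ^ (m + 2)) := by simp
      _ ≤ π ^ (m + 0 + 2) * e ^ 2 * (K * i ^ (m + 2)) := by gcongr
      _ = _ := by ring
  · calc _ ≤ π ^ (m + n + 2) * e ^ 2 * (K * (i ^ (m + 2) * j ^ n) + K * (i ^ m * j ^ (n + 2))) :=
          by gcongr
      _ = _ := by ring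
end
end

section
/- For every ρ* > 0 there exists a constant C > 0 depending only on ρ* such that for every integer N ≥ 2 with ε = 1/N and every (i', j') ∈ F_N: ‖ B_D[i', j'] − B_C[i', j'] ‖ ≤ C·ε²·((i')² + (j')²)², where ‖·‖ is the spectral (operator) norm on 2×2 real matrices. -/
/-
Write `m = (i', i' + j', j')` for the frequencies attached to `l₁, l₂, l₃`. Both `B_D` and `B_C`
are linear combinations of the twelve fixed matrices `ρ* lₖ lₖᵀ + 12 lₖ⊥ lₖ⊥ᵀ` and `lₖ⊥ l_l⊥ᵀ`, so it
suffices to bound the coefficients. From `|x - sin x| ≤ |x|³/6` one gets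
`4 sin²(π m ε)/ε² = 4π²m² + O(ε² m⁴)` and `sin(2π m ε)/ε = 2π m + O(ε² |m|³)`, while
`c_D = 36 - 8 Σ sin²(π mₖ ε)` lies in `[12, 36]` and differs from `36` by `O(ε² |m|²)`. Every
coefficient of `B_D - B_C` is therefore `O(ε² (|i'| + |j'|)⁴)`, uniformly in `N`.
-/

noncomputable section
open Real Matrix Finset

/-- spectral (operator) norm of a 2×2 real matrix, i.e. the operator norm of
the induced map on Euclidean space -/
def specNorm (M : Matrix (Fin 2) (Fin 2) ℝ) : ℝ :=
  ‖Matrix.toEuclideanCLM (𝕜 := ℝ) M‖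

open scoped Matrix.Norms.L2Operator

lemma specNorm_eq_norm (M : Matrix (Fin 2) (Fin 2) ℝ) : specNorm M = ‖M‖ := rfl

lemma norm_sum_smul_le {ι E : Type*} [SeminormedAddCommGroup E] [NormedSpace ℝ E]
    (s : Finset ι) (a : ι → ℝ) (v : ι → E) {b : ℝ} (h : ∀ x ∈ s, |a x| ≤ b) :
    ‖∑ x ∈ s, a x • v x‖ ≤ b * ∑ x ∈ s, ‖v x‖ := by
  rw [Finset.mul_sum]
  refine (norm_sum_le _ _).trans (Finset.sum_le_sum fun x hx => ?_)
  rw [norm_smul, Real.norm_eq_abs]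
  exact mul_le_mul_of_nonneg_right (h x hx) (norm_nonneg _)

lemma vecMulVec_sum_smul {ι κ R : Type*} [Fintype ι] [Fintype κ] [CommSemiring R]
    {n : Type*} (a : ι → R) (v : ι → n → R) (b : κ → R) (w : κ → n → R) :
    vecMulVec (∑ k, a k • v k) (∑ l, b l • w l)
      = ∑ p : ι × κ, (a p.1 * b p.2) • vecMulVec (v p.1) (w p.2) := by
  ext x y
  simp only [vecMulVec_apply, Finset.sum_apply, Pi.smul_apply, smul_eq_mul, Matrix.sum_apply,
    Matrix.smul_apply, Fintype.sum_prod_type, Finset.sum_mul, Finset.mul_sum]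
  rw [Finset.sum_comm]
  exact Finset.sum_congr rfl fun _ _ => Finset.sum_congr rfl fun _ _ => by ring

lemma abs_sin_mul_div_le {e : ℝ} (he : 0 < e) (y : ℝ) : |Real.sin (y * e) / e| ≤ |y| := by
  rw [abs_div, abs_of_pos he, div_le_iff₀ he]
  simpa [abs_mul, abs_of_pos he] using Real.abs_sin_le_abs (x := y * e)

lemma abs_sin_mul_div_sub_le {e : ℝ} (he : 0 < e) (y : ℝ) :
    |Real.sin (y * e) / e - y| ≤ e ^ 2 * |y| ^ 3 / 6 := by
  have h := Real.abs_sub_sin_le (y * e)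
  rw [abs_sub_comm, abs_mul, abs_of_pos he] at h
  rw [show Real.sin (y * e) / e - y = (Real.sin (y * e) - y * e) / e by field_simp,
    abs_div, abs_of_pos he, div_le_iff₀ he]
  nlinarith

lemma abs_sin_sq_sub_sq_le (x : ℝ) : |Real.sin x ^ 2 - x ^ 2| ≤ |x| ^ 4 / 3 := by
  have h₁ := Real.abs_sub_sin_le x
  have h₂ : |Real.sin x + x| ≤ 2 * |x| := by
    linarith [abs_add_le (Real.sin x) x, Real.abs_sin_le_abs (x := x)]
  calc |Real.sin x ^ 2 - x ^ 2| = |x - Real.sin x| * |Real.sin x + x| := by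
        rw [← abs_mul, abs_sub_comm]; congr 1; ring
    _ ≤ |x| ^ 3 / 6 * (2 * |x|) := mul_le_mul h₁ h₂ (abs_nonneg _) (by positivity)
    _ = |x| ^ 4 / 3 := by ring

lemma abs_sin_mul_sq_div_sub_le {e : ℝ} (he : 0 < e) (y : ℝ) :
    |Real.sin (y * e) ^ 2 / e ^ 2 - y ^ 2| ≤ e ^ 2 * y ^ 4 / 3 := by
  have h := abs_sin_sq_sub_sq_le (y * e)
  rw [show Real.sin (y * e) ^ 2 / e ^ 2 - y ^ 2 = (Real.sin (y * e) ^ 2 - (y * e) ^ 2) / e ^ 2 by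
    field_simp, abs_div, abs_of_pos (pow_pos he 2), div_le_iff₀ (pow_pos he 2)]
  calc _ ≤ |y * e| ^ 4 / 3 := h
    _ = _ := by rw [← abs_pow, abs_of_nonneg (by positivity)]; ring

lemma abs_mul_div_sub_mul_div_le {x y x' y' c T δ γ : ℝ} (hx : |x - x'| ≤ δ)
    (hy : |y - y'| ≤ δ) (hxT : |x| ≤ T) (hx'T : |x'| ≤ T) (hy'T : |y'| ≤ T) (hc : 12 ≤ c)
    (hcγ : |c - 36| ≤ γ) :
    |x * y / c - x' * y' / 36| ≤ T * δ / 6 + T ^ 2 * γ / 432 := by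
  have hT : 0 ≤ T := (abs_nonneg _).trans hxT
  have hδ : 0 ≤ δ := (abs_nonneg _).trans hx
  have hγ : 0 ≤ γ := (abs_nonneg _).trans hcγ
  have hc0 : 0 < c := by linarith
  have hsplit : x * y / c - x' * y' / 36
      = (x * (y - y') + (x - x') * y') / c + x' * y' * (36 - c) / (36 * c) := by
    field_simp; ring
  have hnum : |x * (y - y') + (x - x') * y'| ≤ 2 * T * δ := by
    calc _ ≤ |x| * |y - y'| + |x - x'| * |y'| := by
          simpa only [abs_mul] using abs_add_le (x * (y - y')) ((x - x') * y')
      _ ≤ T * δ + δ * T := by gcongr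
      _ = 2 * T * δ := by ring
  have hrank : |x' * y' * (36 - c)| ≤ T ^ 2 * γ := by
    rw [abs_mul, abs_mul, abs_sub_comm, sq]
    gcongr
  rw [hsplit]
  refine (abs_add_le _ _).trans (add_le_add ?_ ?_)
  · rw [abs_div, abs_of_pos hc0, div_le_iff₀ hc0]
    calc _ ≤ 2 * T * δ := hnum
      _ = T * δ / 6 * 12 := by ring
      _ ≤ T * δ / 6 * c := by gcongr
  · have h36c : 0 < 36 * c := by positivity
    rw [abs_div, abs_of_pos h36c, div_le_iff₀ h36c]
    calc _ ≤ T ^ 2 * γ := hrank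
      _ = T ^ 2 * γ / 432 * (36 * 12) := by ring
      _ ≤ T ^ 2 * γ / 432 * (36 * c) := by gcongr

lemma abs_add_abs_pow_four_le (a b : ℝ) : (|a| + |b|) ^ 4 ≤ 4 * (a ^ 2 + b ^ 2) ^ 2 := by
  calc (|a| + |b|) ^ 4 = ((|a| + |b|) ^ 2) ^ 2 := by ring
    _ ≤ (2 * (|a| ^ 2 + |b| ^ 2)) ^ 2 := by gcongr; exact add_sq_le
    _ = 4 * (a ^ 2 + b ^ 2) ^ 2 := by simp only [sq_abs]; ring

def latticeDir : Fin 3 → Fin 2 → ℝ := ![tl1, tl2, tl3]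

def latticeFreq (i j : ℤ) : Fin 3 → ℝ := ![i, i + j, j]

/-- Fourier symbol of the centred second difference with step `eps N`. -/
def secondDiffSymbol (N : ℕ) (m : ℝ) : ℝ := 4 * Real.sin (π * m * eps N) ^ 2 / eps N ^ 2

/-- Fourier symbol (divided by `i`) of the centred first difference with step `eps N`. -/
def firstDiffSymbol (N : ℕ) (m : ℝ) : ℝ := Real.sin (2 * π * m * eps N) / eps N

lemma AD_eq_sum (ρ : ℝ) (N : ℕ) (i j : ℤ) :
    AD ρ N i j = ∑ k, secondDiffSymbol N (latticeFreq i j k) • blk ρ (latticeDir k) := by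
  simp [AD, secondDiffSymbol, latticeFreq, latticeDir, Fin.sum_univ_three]

lemma AC_eq_sum (ρ : ℝ) (i j : ℤ) :
    AC ρ i j = ∑ k, (4 * π ^ 2 * latticeFreq i j k ^ 2) • blk ρ (latticeDir k) := by
  simp [AC, latticeFreq, latticeDir, Fin.sum_univ_three]

lemma dD_eq_sum (N : ℕ) (i j : ℤ) :
    dD N i j = ∑ k, (12 * firstDiffSymbol N (latticeFreq i j k)) • perp (latticeDir k) := by
  simp [dD, firstDiffSymbol, latticeFreq, latticeDir, Fin.sum_univ_three, smul_add, mul_smul]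

lemma dC_eq_sum (i j : ℤ) :
    dC i j = ∑ k, (12 * (2 * π * latticeFreq i j k)) • perp (latticeDir k) := by
  ext c
  simp [dC, latticeFreq, latticeDir, Fin.sum_univ_three]
  ring

lemma cD_eq_sum (N : ℕ) (i j : ℤ) :
    cD N i j = 36 - 8 * ∑ k, Real.sin (π * latticeFreq i j k * eps N) ^ 2 := by
  simp [cD, latticeFreq, Fin.sum_univ_three, add_assoc]

lemma BD_sub_BC_eq (ρ : ℝ) (N : ℕ) (i j : ℤ) :
    BD ρ N i j - BC ρ i j =
      ∑ k, (secondDiffSymbol N (latticeFreq i j k) - 4 * π ^ 2 * latticeFreq i j k ^ 2) •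
          blk ρ (latticeDir k)
        - ∑ p : Fin 3 × Fin 3,
          (144 * (firstDiffSymbol N (latticeFreq i j p.1) * firstDiffSymbol N (latticeFreq i j p.2)
              / cD N i j
            - 2 * π * latticeFreq i j p.1 * (2 * π * latticeFreq i j p.2) / 36)) •
          vecMulVec (perp (latticeDir p.1)) (perp (latticeDir p.2)) := by
  rw [BD, BC, AD_eq_sum, AC_eq_sum, dD_eq_sum, dC_eq_sum, vecMulVec_sum_smul, vecMulVec_sum_smul,
    Finset.smul_sum, Finset.smul_sum, sub_sub_sub_comm, ← Finset.sum_sub_distrib,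
    ← Finset.sum_sub_distrib]
  simp only [← sub_smul, smul_smul]
  congr 1
  refine Finset.sum_congr rfl fun p _ => ?_
  congr 1
  ring

lemma eps_pos {N : ℕ} (hN : N ≠ 0) : 0 < eps N := by
  rw [eps]; positivity

lemma abs_latticeFreq_le (i j : ℤ) (k : Fin 3) : |latticeFreq i j k| ≤ |(i : ℝ)| + |(j : ℝ)| := by
  fin_cases k <;> simp [latticeFreq, abs_add_le]

lemma abs_secondDiffSymbol_sub_le {N : ℕ} (hN : N ≠ 0) {m t : ℝ} (hm : |m| ≤ t) :
    |secondDiffSymbol N m - 4 * π ^ 2 * m ^ 2| ≤ 4 * π ^ 4 / 3 * eps N ^ 2 * t ^ 4 := by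
  have h := abs_sin_mul_sq_div_sub_le (eps_pos hN) (π * m)
  have hm4 : m ^ 4 ≤ t ^ 4 := by
    simpa only [(show Even 4 by decide).pow_abs] using pow_le_pow_left₀ (abs_nonneg m) hm 4
  rw [secondDiffSymbol, show 4 * Real.sin (π * m * eps N) ^ 2 / eps N ^ 2 - 4 * π ^ 2 * m ^ 2
    = 4 * (Real.sin (π * m * eps N) ^ 2 / eps N ^ 2 - (π * m) ^ 2) by ring, abs_mul,
    abs_of_pos four_pos]
  calc 4 * |Real.sin (π * m * eps N) ^ 2 / eps N ^ 2 - (π * m) ^ 2|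
      ≤ 4 * (eps N ^ 2 * (π * m) ^ 4 / 3) := by gcongr
    _ = 4 * π ^ 4 / 3 * eps N ^ 2 * m ^ 4 := by ring
    _ ≤ 4 * π ^ 4 / 3 * eps N ^ 2 * t ^ 4 := by gcongr

lemma twelve_le_cD (N : ℕ) (i j : ℤ) : 12 ≤ cD N i j := by
  rw [cD_eq_sum]
  have := Finset.sum_le_sum fun k (_ : k ∈ (Finset.univ : Finset (Fin 3))) =>
    Real.sin_sq_le_one (π * latticeFreq i j k * eps N)
  simp only [sum_const, card_univ, Fintype.card_fin, nsmul_eq_mul, Nat.cast_ofNat, mul_one] at this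
  linarith

lemma abs_cD_sub_le (N : ℕ) {i j : ℤ} {t : ℝ} (ht : ∀ k, |latticeFreq i j k| ≤ t) :
    |cD N i j - 36| ≤ 24 * π ^ 2 * eps N ^ 2 * t ^ 2 := by
  have hsin : ∀ k, Real.sin (π * latticeFreq i j k * eps N) ^ 2 ≤ π ^ 2 * eps N ^ 2 * t ^ 2 :=
    fun k => Real.sin_sq_le_sq.trans <| by
      rw [mul_pow, mul_pow, mul_right_comm]
      exact mul_le_mul_of_nonneg_left (sq_le_sq' (abs_le.mp (ht k)).1 (abs_le.mp (ht k)).2)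
        (by positivity)
  rw [cD_eq_sum, abs_sub_comm, sub_sub_cancel, abs_of_nonneg (by positivity)]
  have := Finset.sum_le_sum fun k (_ : k ∈ (Finset.univ : Finset (Fin 3))) => hsin k
  simp only [sum_const, card_univ, Fintype.card_fin, nsmul_eq_mul, Nat.cast_ofNat] at this
  linarith

lemma abs_rankOneCoeff_le {N : ℕ} (hN : N ≠ 0) {i j : ℤ} {t : ℝ}
    (ht : ∀ k, |latticeFreq i j k| ≤ t) (p : Fin 3 × Fin 3) :
    |144 * (firstDiffSymbol N (latticeFreq i j p.1) * firstDiffSymbol N (latticeFreq i j p.2)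
        / cD N i j - 2 * π * latticeFreq i j p.1 * (2 * π * latticeFreq i j p.2) / 36)|
      ≤ 96 * π ^ 4 * eps N ^ 2 * t ^ 4 := by
  have he := eps_pos hN
  have hT : ∀ k, |2 * π * latticeFreq i j k| ≤ 2 * π * t := fun k => by
    rw [abs_mul, abs_of_pos (by positivity)]; gcongr; exact ht k
  have hsub : ∀ k, |firstDiffSymbol N (latticeFreq i j k) - 2 * π * latticeFreq i j k|
      ≤ eps N ^ 2 * (2 * π * t) ^ 3 / 6 := fun k =>
    (abs_sin_mul_div_sub_le he _).trans (by gcongr; exact hT k)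
  have h := abs_mul_div_sub_mul_div_le (hsub p.1) (hsub p.2)
    ((abs_sin_mul_div_le he _).trans (hT p.1)) (hT p.1) (hT p.2) (twelve_le_cD N i j)
    (abs_cD_sub_le N ht)
  rw [abs_mul, abs_of_pos (by norm_num : (0 : ℝ) < 144)]
  calc _ ≤ 144 * (2 * π * t * (eps N ^ 2 * (2 * π * t) ^ 3 / 6) / 6
          + (2 * π * t) ^ 2 * (24 * π ^ 2 * eps N ^ 2 * t ^ 2) / 432) := by gcongr
    _ = 96 * π ^ 4 * eps N ^ 2 * t ^ 4 := by ring

theorem schur_difference_general (ρ : ℝ) :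
    ∃ C > 0, ∀ N : ℕ, 2 ≤ N → ∀ i j : ℤ, inFreq N i j →
      specNorm (BD ρ N i j - BC ρ i j)
        ≤ C * (eps N)^2 * ((i:ℝ)^2 + (j:ℝ)^2)^2 := by
  set K := ∑ k, ‖blk ρ (latticeDir k)‖
    + ∑ p : Fin 3 × Fin 3, ‖vecMulVec (perp (latticeDir p.1)) (perp (latticeDir p.2))‖ with hK
  have hK0 : 0 ≤ K := by rw [hK]; positivity
  refine ⟨384 * π ^ 4 * (K + 1), by positivity, fun N hN i j _ => ?_⟩
  have hN0 : N ≠ 0 := by omega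
  have ht := abs_latticeFreq_le i j
  set t := |(i : ℝ)| + |(j : ℝ)|
  have hb : 4 * π ^ 4 / 3 * eps N ^ 2 * t ^ 4 ≤ 96 * π ^ 4 * eps N ^ 2 * t ^ 4 := by
    gcongr; linarith [pow_pos pi_pos 4]
  calc specNorm (BD ρ N i j - BC ρ i j) ≤ 96 * π ^ 4 * eps N ^ 2 * t ^ 4 * K := by
        rw [specNorm_eq_norm, BD_sub_BC_eq, hK, mul_add]
        exact (norm_sub_le _ _).trans <| add_le_add
          (norm_sum_smul_le _ _ _ fun k _ => (abs_secondDiffSymbol_sub_le hN0 (ht k)).trans hb)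
          (norm_sum_smul_le _ _ _ fun p _ => abs_rankOneCoeff_le hN0 ht p)
    _ ≤ 96 * π ^ 4 * eps N ^ 2 * (4 * ((i : ℝ) ^ 2 + (j : ℝ) ^ 2) ^ 2) * (K + 1) := by
        gcongr
        · exact abs_add_abs_pow_four_le _ _
        · linarith
    _ = 384 * π ^ 4 * (K + 1) * eps N ^ 2 * ((i : ℝ) ^ 2 + (j : ℝ) ^ 2) ^ 2 := by ring

/-- for every ρ* > 0 there is C > 0 depending only on ρ* such that
for every N ≥ 2 (ε = 1/N) and every (i', j') ∈ F_N,
‖B_D[i',j'] − B_C[i',j']‖ ≤ C ε² ((i')² + (j')²)² in spectral norm. -/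
theorem schur_difference (ρ : ℝ) (hρ : 0 < ρ) :
    ∃ C > 0, ∀ N : ℕ, 2 ≤ N → ∀ i j : ℤ, inFreq N i j →
      specNorm (BD ρ N i j - BC ρ i j)
        ≤ C * (eps N)^2 * ((i:ℝ)^2 + (j:ℝ)^2)^2 :=
  schur_difference_general ρ
end
end
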